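/- arXiv:1610.08370 — 5 statements merged into one kernel-verified Lean document; each statement's English description precedes it below -/
import Mathlib

section
/- Let c≥1 and k≥1 be integers. Then Σ_B q^{b_1 + 2b_2 + ⋯ + (k−1)b_{k−1}} · (q−1)^{#{i : b_i>0}−1} · ∏_{i : b_i>0} q^{b_i−1} = q^{k(c−1)} [k]_q, where the sum ranges over all tuples B=(b_0,b_1,…,b_{k−1}) of nonnegative integers with b_0+b_1+⋯+b_{k−1}=c. -/
open Finset Polynomial

namespace ThresholdFlow

/-- A threshold graph on `{0,…,n}` labeled by reverse degree sequence: whenever `i > j` are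
adjacent and `i' ≤ i`, `j' ≤ j`, `i' ≠ j'`, then `i'` and `j'` are adjacent. -/
def IsThreshold (n : ℕ) (G : SimpleGraph (Fin (n+1))) : Prop :=
  ∀ i j i' j' : Fin (n+1), j < i → G.Adj i j → i' ≤ i → j' ≤ j → i' ≠ j' → G.Adj i' j'

/-- An integer `a`-flow on `G`: nonnegative integers on the edges of `G` (oriented from the
larger endpoint `i` to the smaller endpoint `j`, recorded as `f i j`), with net flow `a i`
at every vertex `i ≠ 0`. -/
def IsFlow (n : ℕ) (G : SimpleGraph (Fin (n+1))) (a : Fin (n+1) → ℕ)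
    (f : Fin (n+1) → Fin (n+1) → ℕ) : Prop :=
  (∀ i j, f i j ≠ 0 → j < i ∧ G.Adj i j) ∧
  (∀ i : Fin (n+1), i ≠ 0 → ∑ j, f i j = a i + ∑ j, f j i)

/-- The number of positive entries of a flow. -/
def posCount (n : ℕ) (f : Fin (n+1) → Fin (n+1) → ℕ) : ℕ :=
  (Finset.univ.filter fun pr : Fin (n+1) × Fin (n+1) => 0 < f pr.1 pr.2).card

/-- `[b]_q = 1 + q + ⋯ + q^(b-1)` as a polynomial in `ℤ[q]`. -/
noncomputable def qnat (b : ℕ) : Polynomial ℤ := ∑ k ∈ Finset.range b, X ^ k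

/-- `Ehr_{q,1}(F_G(a))`: the sum over integer `a`-flows with exactly `n` positive entries of
`∏_{e : f(e) > 0} [f(e)]_q`. -/
noncomputable def Ehr1 (n : ℕ) (G : SimpleGraph (Fin (n+1))) (a : Fin (n+1) → ℕ) :
    Polynomial ℤ :=
  ∑ᶠ f ∈ {f | IsFlow n G a f ∧ posCount n f = n},
    ∏ i, ∏ j, if 0 < f i j then qnat (f i j) else 1

/-- `Ehr_{q,0}(F_G(a))`: the sum over all integer `a`-flows of
`(q-1)^(s(f)-n) ∏_{e : f(e) > 0} q^(f(e)-1)`. -/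
noncomputable def Ehr0 (n : ℕ) (G : SimpleGraph (Fin (n+1))) (a : Fin (n+1) → ℕ) :
    Polynomial ℤ :=
  ∑ᶠ f ∈ {f | IsFlow n G a f},
    (X - 1) ^ (posCount n f - n) * ∏ i, ∏ j, if 0 < f i j then X ^ (f i j - 1) else 1

/-- `Ehr_{1,1}(F_G(a))`: the sum over integer `a`-flows with exactly `n` positive entries of
the product of the positive entries. -/
noncomputable def Ehr11 (n : ℕ) (G : SimpleGraph (Fin (n+1))) (a : Fin (n+1) → ℕ) : ℕ :=
  ∑ᶠ f ∈ {f | IsFlow n G a f ∧ posCount n f = n},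
    ∏ i, ∏ j, if 0 < f i j then f i j else 1

/-- A spanning tree of `G` rooted at `0`, encoded by its parent function `p`:
`p 0 = 0`, each `i ≠ 0` is adjacent in `G` to its parent `p i`, and iterating the parent
function from any vertex reaches the root `0`. -/
def IsSpanTree (n : ℕ) (G : SimpleGraph (Fin (n+1))) (p : Fin (n+1) → Fin (n+1)) : Prop :=
  p 0 = 0 ∧ (∀ i, i ≠ 0 → G.Adj i (p i)) ∧ ∀ i, ∃ k, p^[k] i = 0

/-- `j` is a descendant of `i` in the rooted tree with parent function `p`
(in particular every vertex is a descendant of itself). -/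
def Desc (n : ℕ) (p : Fin (n+1) → Fin (n+1)) (i j : Fin (n+1)) : Prop :=
  ∃ k, p^[k] j = i

/-- The set of inversions of the rooted tree `p`: pairs `(i,j)` with `i > j`, `i ≠ 0` and
`j` a descendant of `i`. -/
def invSet (n : ℕ) (p : Fin (n+1) → Fin (n+1)) : Set (Fin (n+1) × Fin (n+1)) :=
  {pr | pr.2 < pr.1 ∧ pr.1 ≠ 0 ∧ Desc n p pr.1 pr.2}

/-- The number of inversions of the rooted tree `p`. -/
noncomputable def treeInv (n : ℕ) (p : Fin (n+1) → Fin (n+1)) : ℕ := (invSet n p).ncard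

/-- A rooted spanning tree is increasing if it has no inversions. -/
def IsIncr (n : ℕ) (p : Fin (n+1) → Fin (n+1)) : Prop := invSet n p = ∅

/-- `δ_T(i)`: the number of descendants of `i` (including `i` itself). -/
noncomputable def delta (n : ℕ) (p : Fin (n+1) → Fin (n+1)) (i : Fin (n+1)) : ℕ :=
  Set.ncard {j | Desc n p i j}

/-- `δ_T^a(i) = Σ_j a_j`, summed over the descendants `j` of `i` (including `i` itself). -/
noncomputable def deltaA (n : ℕ) (a : Fin (n+1) → ℕ) (p : Fin (n+1) → Fin (n+1))
    (i : Fin (n+1)) : ℕ :=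
  ∑ᶠ j ∈ {j | Desc n p i j}, a j

/-- The degree `d_i` of vertex `i` in `G`. -/
noncomputable def deg (n : ℕ) (G : SimpleGraph (Fin (n+1))) (i : Fin (n+1)) : ℕ :=
  Set.ncard {j | G.Adj i j}

/-- `d̄_i`: the number of neighbors of `i` smaller than `i`. -/
noncomputable def dbar (n : ℕ) (G : SimpleGraph (Fin (n+1))) (i : Fin (n+1)) : ℕ :=
  Set.ncard {j | j < i ∧ G.Adj i j}

/-- A `G`-parking function, encoded as `P : Fin (n+1) → ℕ` with `P 0 = 0`. -/
def IsParking (n : ℕ) (G : SimpleGraph (Fin (n+1))) (P : Fin (n+1) → ℕ) : Prop :=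
  P 0 = 0 ∧ ∀ S : Finset (Fin (n+1)), S.Nonempty → (0 : Fin (n+1)) ∉ S →
    ∃ i ∈ S, P i < Set.ncard {j | j ∉ S ∧ G.Adj i j}

/-- `codeg(P) = (|E(G)| - n) - Σ_{i=1}^n P(i)`. -/
noncomputable def codeg (n : ℕ) (G : SimpleGraph (Fin (n+1))) (P : Fin (n+1) → ℕ) : ℕ :=
  (Set.ncard G.edgeSet - n) - ∑ i, P i

/-- `[m]_q` as a Laurent polynomial. -/
noncomputable def lq (m : ℕ) : LaurentPolynomial ℤ :=
  ∑ k ∈ Finset.range m, LaurentPolynomial.T (k : ℤ)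

/-- `[b]_{q^m} = 1 + q^m + ⋯ + q^{m(b-1)}` as a Laurent polynomial. -/
noncomputable def lqpow (m b : ℕ) : LaurentPolynomial ℤ :=
  ∑ k ∈ Finset.range b, LaurentPolynomial.T ((m : ℤ) * k)

/-- `wt_{q,q⁻¹}(b)`: the substitution `t = q⁻¹` in `wt_{q,t}(b) = Σ_{k=0}^{b-1} q^k t^{b-1-k}`,
with `wt_{q,q⁻¹}(0) = 1`. -/
noncomputable def wtqq (b : ℕ) : LaurentPolynomial ℤ :=
  if b = 0 then 1 else ∑ k ∈ Finset.range b, LaurentPolynomial.T (2 * (k : ℤ) - ((b : ℤ) - 1))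

/-- `Ehr_{q,q⁻¹}(F_G(a))`: the sum over all integer `a`-flows `f` of
`(-(1-q)(1-q⁻¹))^(s(f)-n) ∏_e wt_{q,q⁻¹}(f(e))`, as a Laurent polynomial in `q`. -/
noncomputable def Ehrqq (n : ℕ) (G : SimpleGraph (Fin (n+1))) (a : Fin (n+1) → ℕ) :
    LaurentPolynomial ℤ :=
  ∑ᶠ f ∈ {f | IsFlow n G a f},
    (-((1 - LaurentPolynomial.T 1) * (1 - LaurentPolynomial.T (-1)))) ^ (posCount n f - n) *
      ∏ i, ∏ j, wtqq (f i j)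

end ThresholdFlow

namespace ThresholdFlow

lemma sum_adT_succ {M : Type*} [AddCommMonoid M] (k n : ℕ) (f : (Fin (k+1) → ℕ) → M) :
    ∑ B ∈ Finset.Nat.antidiagonalTuple (k+1) n, f B
      = ∑ b ∈ Finset.range (n+1),
          ∑ B ∈ Finset.Nat.antidiagonalTuple k (n - b), f (Fin.cons b B) := by
  rw [Finset.sum_sigma']
  refine Finset.sum_nbij' (fun B => ⟨B 0, Fin.tail B⟩) (fun p => Fin.cons p.1 p.2) ?_ ?_ ?_ ?_ ?_
  · intro B hB
    rw [Finset.Nat.mem_antidiagonalTuple] at hB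
    rw [Fin.sum_univ_succ] at hB
    simp only [Finset.mem_sigma, Finset.mem_range, Finset.Nat.mem_antidiagonalTuple]
    constructor
    · omega
    · simp only [Fin.tail]; omega
  · rintro ⟨b, B⟩ hp
    simp only [Finset.mem_sigma, Finset.mem_range, Finset.Nat.mem_antidiagonalTuple] at hp
    rw [Finset.Nat.mem_antidiagonalTuple, Fin.sum_cons]
    dsimp only at hp ⊢
    omega
  · intro B _; exact Fin.cons_self_tail B
  · rintro ⟨b, B⟩ _; simp
  · intro B _; simp [Fin.cons_self_tail]

lemma consExp (b k : ℕ) (B : Fin k → ℕ) :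
    (∑ i : Fin (k+1), ((i : ℕ) * ((Fin.cons b B : Fin (k+1) → ℕ)) i + (((Fin.cons b B : Fin (k+1) → ℕ)) i - 1)))
      = (b - 1) + ((∑ i : Fin k, ((i : ℕ) * B i + (B i - 1))) + ∑ i, B i) := by
  rw [Fin.sum_univ_succ, ← Finset.sum_add_distrib]
  simp only [Fin.cons_zero, Fin.cons_succ, Fin.val_succ, Fin.val_zero, zero_mul, zero_add]
  congr 1
  refine Finset.sum_congr rfl fun i _ => ?_
  rw [Nat.add_mul, one_mul]
  omega

lemma consCard (b k : ℕ) (B : Fin k → ℕ) :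
    (Finset.univ.filter fun i : Fin (k+1) => 0 < (Fin.cons b B : Fin (k+1) → ℕ) i).card
      = (if 0 < b then 1 else 0) + (Finset.univ.filter fun i : Fin k => 0 < B i).card := by
  rw [Finset.card_filter, Finset.card_filter, Fin.sum_univ_succ]
  simp [Fin.cons_succ]

lemma cardPos (k d : ℕ) (B : Fin k → ℕ) (hB : ∑ i, B i = d + 1) :
    0 < (Finset.univ.filter fun i : Fin k => 0 < B i).card := by
  rw [Finset.card_pos]
  have h : ∃ i, 0 < B i := by
    by_contra h
    push_neg at h
    have : ∀ i, B i = 0 := fun i => Nat.le_zero.mp (h i)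
    simp [this] at hB
  obtain ⟨i, hi⟩ := h
  exact ⟨i, by simp [hi]⟩

lemma key (k : ℕ) : ∀ m : ℕ,
    ∑ B ∈ Finset.Nat.antidiagonalTuple k (m+1),
      (X : Polynomial ℤ) ^ (∑ i : Fin k, ((i : ℕ) * B i + (B i - 1))) *
        ((X : Polynomial ℤ) - 1) ^ ((Finset.univ.filter fun i => 0 < B i).card - 1)
      = (X : Polynomial ℤ) ^ (k * m) * qnat k := by
  induction k with
  | zero =>
    intro m
    simp [Finset.Nat.antidiagonalTuple_zero_succ, qnat]
  | succ k ih =>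
    intro m
    rw [sum_adT_succ, Finset.sum_range_succ', Finset.sum_range_succ]
    have hT0 : ∑ B ∈ Finset.Nat.antidiagonalTuple k (m+1-0),
        (X : Polynomial ℤ) ^ (∑ i : Fin (k+1), ((i : ℕ) * ((Fin.cons 0 B : Fin (k+1) → ℕ)) i + (((Fin.cons 0 B : Fin (k+1) → ℕ)) i - 1))) *
          ((X : Polynomial ℤ) - 1) ^
            ((Finset.univ.filter fun i => 0 < (Fin.cons 0 B : Fin (k+1) → ℕ) i).card - 1)
        = (X : Polynomial ℤ) ^ (m+1) * ((X : Polynomial ℤ) ^ (k * m) * qnat k) := by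
      rw [← ih m, Finset.mul_sum]
      refine Finset.sum_congr rfl fun B hB => ?_
      rw [Finset.Nat.mem_antidiagonalTuple] at hB
      rw [consExp, consCard, hB]
      norm_num
      rw [pow_add]
      ring
    have hTlast : ∑ B ∈ Finset.Nat.antidiagonalTuple k (m+1-(m+1)),
        (X : Polynomial ℤ) ^
            (∑ i : Fin (k+1), ((i : ℕ) * ((Fin.cons (m+1) B : Fin (k+1) → ℕ)) i + (((Fin.cons (m+1) B : Fin (k+1) → ℕ)) i - 1))) *
          ((X : Polynomial ℤ) - 1) ^
            ((Finset.univ.filter fun i => 0 < (Fin.cons (m+1) B : Fin (k+1) → ℕ) i).card - 1)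
        = (X : Polynomial ℤ) ^ m := by
      rw [Nat.sub_self, Finset.Nat.antidiagonalTuple_zero_right, Finset.sum_singleton]
      rw [consExp, consCard]
      simp
    have hTmid : ∀ j ∈ Finset.range m,
        ∑ B ∈ Finset.Nat.antidiagonalTuple k (m+1-(j+1)),
          (X : Polynomial ℤ) ^
              (∑ i : Fin (k+1), ((i : ℕ) * ((Fin.cons (j+1) B : Fin (k+1) → ℕ)) i + (((Fin.cons (j+1) B : Fin (k+1) → ℕ)) i - 1))) *
            ((X : Polynomial ℤ) - 1) ^
              ((Finset.univ.filter fun i => 0 < (Fin.cons (j+1) B : Fin (k+1) → ℕ) i).card - 1)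
        = (X : Polynomial ℤ) ^ (m + k * (m-1-j) + k)
            - (X : Polynomial ℤ) ^ (m + k * (m-1-j)) := by
      intro j hj
      rw [Finset.mem_range] at hj
      have hd : m + 1 - (j + 1) = (m - 1 - j) + 1 := by omega
      rw [hd]
      have : ∑ B ∈ Finset.Nat.antidiagonalTuple k ((m-1-j)+1),
          (X : Polynomial ℤ) ^
              (∑ i : Fin (k+1), ((i : ℕ) * ((Fin.cons (j+1) B : Fin (k+1) → ℕ)) i + (((Fin.cons (j+1) B : Fin (k+1) → ℕ)) i - 1))) *
            ((X : Polynomial ℤ) - 1) ^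
              ((Finset.univ.filter fun i => 0 < (Fin.cons (j+1) B : Fin (k+1) → ℕ) i).card - 1)
          = (X : Polynomial ℤ) ^ m * (((X : Polynomial ℤ) - 1) *
              ((X : Polynomial ℤ) ^ (k * (m-1-j)) * qnat k)) := by
        rw [← ih (m-1-j), Finset.mul_sum, Finset.mul_sum]
        refine Finset.sum_congr rfl fun B hB => ?_
        rw [Finset.Nat.mem_antidiagonalTuple] at hB
        have hs := cardPos k (m-1-j) B hB
        rw [consExp, consCard, hB, if_pos (Nat.succ_pos j)]
        have h1 : 1 + (Finset.univ.filter fun i => 0 < B i).card - 1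
            = ((Finset.univ.filter fun i => 0 < B i).card - 1) + 1 := by omega
        rw [h1, show (j + 1 - 1) + ((∑ i : Fin k, ((i : ℕ) * B i + (B i - 1))) + (m - 1 - j + 1))
            = m + ∑ i : Fin k, ((i : ℕ) * B i + (B i - 1)) by omega, pow_succ, pow_add]
        ring
      rw [this]
      have hq : ((X : Polynomial ℤ) - 1) * qnat k = (X : Polynomial ℤ) ^ k - 1 := by
        rw [qnat, mul_comm]
        exact geom_sum_mul X k
      rw [show (X : Polynomial ℤ) ^ m * (((X : Polynomial ℤ) - 1) *
            ((X : Polynomial ℤ) ^ (k * (m-1-j)) * qnat k))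
          = (X : Polynomial ℤ) ^ m * (X : Polynomial ℤ) ^ (k * (m-1-j)) *
              (((X : Polynomial ℤ) - 1) * qnat k) by ring, hq]
      simp only [pow_add]
      ring
    rw [Finset.sum_congr rfl hTmid, hT0, hTlast]
    have htel : ∑ j ∈ Finset.range m,
        ((X : Polynomial ℤ) ^ (m + k * (m-1-j) + k) - (X : Polynomial ℤ) ^ (m + k * (m-1-j)))
        = (X : Polynomial ℤ) ^ (m + k * m) - (X : Polynomial ℤ) ^ m := by
      rw [← Finset.sum_range_reflect]
      have : ∀ j ∈ Finset.range m,
          ((X : Polynomial ℤ) ^ (m + k * (m-1-(m-1-j)) + k)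
            - (X : Polynomial ℤ) ^ (m + k * (m-1-(m-1-j))))
          = ((X : Polynomial ℤ) ^ (m + k * (j+1)) - (X : Polynomial ℤ) ^ (m + k * j)) := by
        intro j hj
        rw [Finset.mem_range] at hj
        have h2 : m - 1 - (m - 1 - j) = j := by omega
        rw [h2, Nat.mul_succ, ← Nat.add_assoc]
      rw [Finset.sum_congr rfl this]
      have h3 := Finset.sum_range_sub (fun i => (X : Polynomial ℤ) ^ (m + k * i)) m
      simpa using h3
    rw [htel]
    have hq1 : qnat (k+1) = X * qnat k + 1 := by
      rw [qnat, qnat]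
      exact geom_sum_succ
    rw [hq1]
    rw [show (k+1) * m = m + k * m by ring]
    simp only [pow_add, pow_succ]
    ring


theorem simplex_weight_sum (c k : ℕ) (hc : 1 ≤ c) (hk : 1 ≤ k) :
    ∑ᶠ B ∈ {B : Fin k → ℕ | ∑ i, B i = c},
      ((X : Polynomial ℤ) ^ (∑ i : Fin k, (i : ℕ) * B i) *
        ((X : Polynomial ℤ) - 1) ^ ((Finset.univ.filter fun i : Fin k => 0 < B i).card - 1) *
        ∏ i, if 0 < B i then (X : Polynomial ℤ) ^ (B i - 1) else 1) =
      (X : Polynomial ℤ) ^ (k * (c - 1)) * qnat k := by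
  obtain ⟨m, rfl⟩ : ∃ m, c = m + 1 := ⟨c - 1, by omega⟩
  have hset : {B : Fin k → ℕ | ∑ i, B i = m + 1}
      = ↑(Finset.Nat.antidiagonalTuple k (m + 1)) := by
    ext B
    simp [Finset.Nat.mem_antidiagonalTuple]
  rw [hset, finsum_mem_coe_finset, Nat.add_sub_cancel, ← key k m]
  refine Finset.sum_congr rfl fun B _ => ?_
  have hprod : (∏ i, if 0 < B i then (X : Polynomial ℤ) ^ (B i - 1) else 1)
      = ∏ i, (X : Polynomial ℤ) ^ (B i - 1) := by
    refine Finset.prod_congr rfl fun i _ => ?_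
    split_ifs with h
    · rfl
    · have h0 : B i = 0 := by omega
      simp [h0]
  rw [hprod, Finset.prod_pow_eq_pow_sum, Finset.sum_add_distrib, pow_add]
  ring


end ThresholdFlow
end

section
/- Let n≥1 and let a_1,…,a_n be positive integers. Then Ehr_{q,0}(F_{K_{n+1}}(a)) = q^{a_1 + 2a_2 + ⋯ + na_n − binom(n+1,2)} [n]_q!, where K_{n+1} is the complete graph on vertices {0,1,…,n} and [n]_q! = [n]_q [n−1]_q ⋯ [1]_q. In particular, Ehr_{q,0}(F_{K_{n+1}}(1,1,…,1)) = [n]_q!. -/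
open Finset Polynomial

namespace ThresholdFlow

noncomputable def gE (b : ℕ) : Polynomial ℤ := if 0 < b then (X - 1) * X ^ (b - 1) else 1

lemma gE_zero : gE 0 = 1 := by simp [gE]

noncomputable def W (n : ℕ) (f : Fin (n+1) → Fin (n+1) → ℕ) : Polynomial ℤ :=
  ∏ i, ∏ j, gE (f i j)

lemma X_sub_one_ne_zero : (X - 1 : Polynomial ℤ) ≠ 0 := by
  intro h
  have := congrArg (Polynomial.eval 0) h
  simp at this

lemma geomAux (N : ℕ) (p : ℕ) :
    ∑ k ∈ Finset.range (p+1),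
      (if 0 < k then (X - 1) * X ^ (k - 1 + N * k) else 1 : Polynomial ℤ) * X ^ (N * (p - k))
    = X ^ (N * p + p) := by
  induction p with
  | zero => simp
  | succ p ih =>
    rw [Finset.sum_range_succ]
    have h1 : ∀ k ∈ Finset.range (p+1),
        (if 0 < k then (X - 1) * X ^ (k - 1 + N * k) else 1 : Polynomial ℤ) * X ^ (N * (p + 1 - k))
        = ((if 0 < k then (X - 1) * X ^ (k - 1 + N * k) else 1) * X ^ (N * (p - k))) * X ^ N := by
      intro k hk
      have hk' : k ≤ p := by simpa [Nat.lt_succ_iff] using hk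
      have h2 : p + 1 - k = (p - k) + 1 := by omega
      rw [h2, Nat.mul_succ, pow_add]; ring
    rw [Finset.sum_congr rfl h1, ← Finset.sum_mul, ih, if_pos (Nat.succ_pos p)]
    have h3 : p + 1 - 1 + N * (p + 1) = N * p + p + N := by
      have : N * (p+1) = N * p + N := by ring
      omega
    rw [Nat.sub_self, Nat.mul_zero, pow_zero, mul_one, h3]
    have h4 : N * (p+1) + (p+1) = (N * p + p + N) + 1 := by ring
    rw [h4, pow_succ, pow_add]
    ring

lemma tuple_split (N m : ℕ) (F : (Fin (N+1) → ℕ) → Polynomial ℤ) :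
    ∑ c ∈ Finset.Nat.antidiagonalTuple (N+1) m, F c
    = ∑ x ∈ (Finset.range (m+1)).sigma (fun k => Finset.Nat.antidiagonalTuple N (m - k)),
        F (Fin.snoc x.2 x.1) := by
  refine Finset.sum_nbij' (fun c => ⟨c (Fin.last N), Fin.init c⟩)
      (fun x => Fin.snoc x.2 x.1) ?_ ?_ ?_ ?_ ?_
  · intro c hc
    rw [Finset.Nat.mem_antidiagonalTuple] at hc
    have hle : c (Fin.last N) ≤ m := hc ▸ Finset.single_le_sum (fun i _ => Nat.zero_le _) (Finset.mem_univ _)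
    rw [Finset.mem_sigma]
    dsimp only
    constructor
    · simpa [Nat.lt_succ_iff] using hle
    · rw [Finset.Nat.mem_antidiagonalTuple]
      have := Fin.sum_univ_castSucc c
      rw [hc] at this
      have hinit : ∀ j : Fin N, Fin.init c j = c j.castSucc := fun j => rfl
      simp_rw [hinit]
      omega
  · rintro ⟨k, c⟩ hx
    rw [Finset.mem_sigma] at hx
    obtain ⟨hk, hc⟩ := hx
    rw [Finset.mem_range, Nat.lt_succ_iff] at hk
    rw [Finset.Nat.mem_antidiagonalTuple] at hc ⊢
    dsimp only at hk hc ⊢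
    rw [Fin.sum_univ_castSucc]
    simp only [Fin.snoc_castSucc, Fin.snoc_last]
    omega
  · intro c _
    exact Fin.snoc_init_self c
  · rintro ⟨k, c⟩ _
    simp only [Fin.snoc_last, Fin.init_snoc]
  · intro c _
    rw [Fin.snoc_init_self]

lemma keyIdent (N : ℕ) : ∀ m : ℕ, 1 ≤ m →
    ∑ c ∈ Finset.Nat.antidiagonalTuple N m,
      ∏ j : Fin N, (if 0 < c j then (X - 1) * X ^ (c j - 1 + (j : ℕ) * c j) else 1 : Polynomial ℤ)
    = (X - 1) * X ^ (N * (m - 1)) * qnat N := by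
  induction N with
  | zero =>
    intro m hm
    have h0 : Finset.Nat.antidiagonalTuple 0 m = ∅ := by
      ext c
      simp only [Finset.Nat.mem_antidiagonalTuple, Finset.notMem_empty, iff_false]
      simp only [Finset.univ_eq_empty, Finset.sum_empty]
      omega
    rw [h0]
    simp [qnat]
  | succ N ih =>
    intro m hm
    obtain ⟨p, rfl⟩ : ∃ p, m = p + 1 := ⟨m - 1, by omega⟩
    rw [tuple_split, Finset.sum_sigma]
    have hsummand : ∀ k : ℕ, ∀ c : Fin N → ℕ,
        (∏ j : Fin (N+1), (if 0 < (Fin.snoc c k : Fin (N+1) → ℕ) j then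
            (X - 1) * X ^ ((Fin.snoc c k : Fin (N+1) → ℕ) j - 1 + (j : ℕ) * (Fin.snoc c k : Fin (N+1) → ℕ) j) else 1 : Polynomial ℤ))
        = (∏ j : Fin N, (if 0 < c j then (X - 1) * X ^ (c j - 1 + (j : ℕ) * c j) else 1))
            * (if 0 < k then (X - 1) * X ^ (k - 1 + N * k) else 1) := by
      intro k c
      rw [Fin.prod_univ_castSucc]
      congr 1
      · refine Finset.prod_congr rfl fun j _ => ?_
        rw [Fin.snoc_castSucc]
        simp
      · rw [Fin.snoc_last]
        simp
    have hinner : ∀ k ∈ Finset.range (p+1+1),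
        (∑ c ∈ Finset.Nat.antidiagonalTuple N (p+1-k),
          ∏ j : Fin (N+1), (if 0 < (Fin.snoc c k : Fin (N+1) → ℕ) j then
            (X - 1) * X ^ ((Fin.snoc c k : Fin (N+1) → ℕ) j - 1 + (j : ℕ) * (Fin.snoc c k : Fin (N+1) → ℕ) j) else 1 : Polynomial ℤ))
        = (∑ c ∈ Finset.Nat.antidiagonalTuple N (p+1-k),
            ∏ j : Fin N, (if 0 < c j then (X - 1) * X ^ (c j - 1 + (j : ℕ) * c j) else 1))
            * (if 0 < k then (X - 1) * X ^ (k - 1 + N * k) else 1) := by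
      intro k _
      rw [Finset.sum_mul]
      exact Finset.sum_congr rfl fun c _ => hsummand k c
    rw [Finset.sum_congr rfl hinner]
    rw [Finset.sum_range_succ]
    have hlastterm :
        (∑ c ∈ Finset.Nat.antidiagonalTuple N (p+1-(p+1)),
            ∏ j : Fin N, (if 0 < c j then (X - 1) * X ^ (c j - 1 + (j : ℕ) * c j) else 1 : Polynomial ℤ))
          * (if 0 < p+1 then (X - 1) * X ^ (p+1 - 1 + N * (p+1)) else 1)
        = (X - 1) * X ^ (p + N * (p+1)) := by
      rw [Nat.sub_self, Finset.Nat.antidiagonalTuple_zero_right, Finset.sum_singleton]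
      simp
    rw [hlastterm]
    have hmid : ∀ k ∈ Finset.range (p+1),
        (∑ c ∈ Finset.Nat.antidiagonalTuple N (p+1-k),
            ∏ j : Fin N, (if 0 < c j then (X - 1) * X ^ (c j - 1 + (j : ℕ) * c j) else 1 : Polynomial ℤ))
          * (if 0 < k then (X - 1) * X ^ (k - 1 + N * k) else 1)
        = ((X - 1) * qnat N) *
            ((if 0 < k then (X - 1) * X ^ (k - 1 + N * k) else 1) * X ^ (N * (p - k))) := by
      intro k hk
      rw [Finset.mem_range] at hk
      have h1 : 1 ≤ p + 1 - k := by omega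
      rw [ih (p+1-k) h1]
      have h2 : p + 1 - k - 1 = p - k := by omega
      rw [h2]
      ring
    rw [Finset.sum_congr rfl hmid, ← Finset.mul_sum, geomAux]
    have hq : qnat (N+1) = qnat N + X ^ N := by
      rw [qnat, qnat, Finset.sum_range_succ]
    rw [Nat.add_sub_cancel, hq]
    have e1 : p + N * (p + 1) = N * p + p + N := by ring
    have e2 : (N+1) * p = N * p + p := by ring
    rw [e1, e2, pow_add]
    ring

lemma flow_cut {n : ℕ} {G : SimpleGraph (Fin (n+1))} {a : Fin (n+1) → ℕ}
    {f : Fin (n+1) → Fin (n+1) → ℕ} (hf : IsFlow n G a f) (v : Fin (n+1)) :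
    ∑ k ∈ Finset.univ.filter (fun k => v < k),
      ∑ j ∈ Finset.univ.filter (fun j => ¬ v < j), f k j
    = ∑ k ∈ Finset.univ.filter (fun k => v < k), a k := by
  classical
  have hcons : ∑ k ∈ Finset.univ.filter (fun k => v < k), ∑ j, f k j
      = ∑ k ∈ Finset.univ.filter (fun k => v < k), a k
        + ∑ k ∈ Finset.univ.filter (fun k => v < k), ∑ j, f j k := by
    rw [← Finset.sum_add_distrib]
    refine Finset.sum_congr rfl fun k hk => ?_
    have hk' : v < k := (Finset.mem_filter.mp hk).2
    exact hf.2 k ((lt_of_le_of_lt (Fin.zero_le v) hk').ne')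
  have hsplit1 : ∀ k : Fin (n+1), ∑ j, f k j
      = ∑ j ∈ Finset.univ.filter (fun j => v < j), f k j
        + ∑ j ∈ Finset.univ.filter (fun j => ¬ v < j), f k j :=
    fun k => (Finset.sum_filter_add_sum_filter_not _ _ _).symm
  have hsplit2 : ∀ k : Fin (n+1), ∑ j, f j k
      = ∑ j ∈ Finset.univ.filter (fun j => v < j), f j k
        + ∑ j ∈ Finset.univ.filter (fun j => ¬ v < j), f j k :=
    fun k => (Finset.sum_filter_add_sum_filter_not _ _ _).symm
  have hzero : ∑ k ∈ Finset.univ.filter (fun k => v < k),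
      ∑ j ∈ Finset.univ.filter (fun j => ¬ v < j), f j k = 0 := by
    refine Finset.sum_eq_zero fun k hk => Finset.sum_eq_zero fun j hj => ?_
    have hk' : v < k := (Finset.mem_filter.mp hk).2
    have hj' : ¬ v < j := (Finset.mem_filter.mp hj).2
    by_contra h
    have := (hf.1 j k h).1
    exact hj' (lt_trans hk' this)
  have hcomm : ∑ k ∈ Finset.univ.filter (fun k => v < k),
        ∑ j ∈ Finset.univ.filter (fun j => v < j), f k j
      = ∑ k ∈ Finset.univ.filter (fun k => v < k),
        ∑ j ∈ Finset.univ.filter (fun j => v < j), f j k := Finset.sum_comm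
  simp_rw [hsplit1, hsplit2] at hcons
  simp only [Finset.sum_add_distrib] at hcons
  omega

lemma flow_le {n : ℕ} {G : SimpleGraph (Fin (n+1))} {a : Fin (n+1) → ℕ}
    {f : Fin (n+1) → Fin (n+1) → ℕ} (hf : IsFlow n G a f) (u w : Fin (n+1)) :
    f u w ≤ ∑ k, a k := by
  classical
  by_cases huw : f u w = 0
  · simp [huw]
  · have hlt : w < u := (hf.1 u w huw).1
    have h1 : f u w ≤ ∑ j ∈ Finset.univ.filter (fun j => ¬ w < j), f u j :=
      Finset.single_le_sum (fun j _ => Nat.zero_le _)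
        (Finset.mem_filter.mpr ⟨Finset.mem_univ _, lt_irrefl w⟩)
    have h2 : ∑ j ∈ Finset.univ.filter (fun j => ¬ w < j), f u j
        ≤ ∑ k ∈ Finset.univ.filter (fun k => w < k),
            ∑ j ∈ Finset.univ.filter (fun j => ¬ w < j), f k j :=
      Finset.single_le_sum
        (f := fun k => ∑ j ∈ Finset.univ.filter (fun j => ¬ w < j), f k j)
        (fun k _ => Nat.zero_le _)
        (Finset.mem_filter.mpr ⟨Finset.mem_univ _, hlt⟩)
    calc f u w ≤ _ := h1
      _ ≤ _ := h2
      _ = ∑ k ∈ Finset.univ.filter (fun k => w < k), a k := flow_cut hf w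
      _ ≤ ∑ k, a k := Finset.sum_le_sum_of_subset (Finset.filter_subset _ _)

lemma flows_finite (n : ℕ) (G : SimpleGraph (Fin (n+1))) (a : Fin (n+1) → ℕ) :
    {f | IsFlow n G a f}.Finite := by
  apply Set.Finite.subset
    (Set.Finite.pi fun i : Fin (n+1) => Set.Finite.pi fun j : Fin (n+1) =>
      Set.finite_Iic (∑ k, a k))
  intro f hf
  simp only [Set.mem_pi, Set.mem_univ, forall_true_left, Set.mem_Iic]
  exact fun i j => flow_le hf i j

lemma W_eq (n : ℕ) (f : Fin (n+1) → Fin (n+1) → ℕ) :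
    W n f = (X - 1) ^ (posCount n f)
      * ∏ i, ∏ j, (if 0 < f i j then X ^ (f i j - 1) else 1 : Polynomial ℤ) := by
  classical
  have hsplit : ∀ b : ℕ, gE b
      = (if 0 < b then (X - 1 : Polynomial ℤ) else 1) * (if 0 < b then X ^ (b-1) else 1) := by
    intro b; by_cases h : 0 < b <;> simp [gE, h]
  unfold W
  simp_rw [hsplit, Finset.prod_mul_distrib]
  congr 1
  rw [posCount, ← Fintype.prod_prod_type']
  rw [Finset.prod_ite, Finset.prod_const, Finset.prod_const_one, mul_one]

lemma le_posCount {n : ℕ} {G : SimpleGraph (Fin (n+1))} {a : Fin (n+1) → ℕ}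
    {f : Fin (n+1) → Fin (n+1) → ℕ} (hf : IsFlow n G a f)
    (ha : ∀ i : Fin (n+1), i ≠ 0 → 0 < a i) : n ≤ posCount n f := by
  classical
  have key : ∀ i : Fin (n+1), i ≠ 0 → ∃ j, 0 < f i j := by
    intro i hi
    by_contra h
    push_neg at h
    have hz : ∑ j, f i j = 0 := Finset.sum_eq_zero fun j _ => Nat.le_zero.mp (h j)
    rw [hf.2 i hi] at hz
    have := ha i hi
    omega
  have hcard : (Finset.univ.filter (fun i : Fin (n+1) => i ≠ 0)).card
      ≤ (Finset.univ.filter fun pr : Fin (n+1) × Fin (n+1) => 0 < f pr.1 pr.2).card := by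
    apply Finset.card_le_card_of_injOn
      (fun i => (i, if h : ∃ j, 0 < f i j then h.choose else 0))
    · intro i hi
      have hi' : i ≠ 0 := (Finset.mem_filter.mp hi).2
      have h := key i hi'
      simp only [Finset.mem_filter, Finset.mem_univ, true_and]
      rw [dif_pos h]
      exact Finset.mem_filter.mpr ⟨Finset.mem_univ _, h.choose_spec⟩
    · intro i _ i' _ hii
      exact congrArg Prod.fst hii
  have hn : (Finset.univ.filter (fun i : Fin (n+1) => i ≠ 0)).card = n := by
    rw [Finset.filter_ne', Finset.card_erase_of_mem (Finset.mem_univ _), Finset.card_univ,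
      Fintype.card_fin]
    omega
  rw [posCount]
  omega

lemma last_ne_zero (n : ℕ) : (Fin.last (n+1) : Fin (n+2)) ≠ 0 := by
  simp [Fin.ext_iff]

lemma flow_top_last_col {n : ℕ} {a : Fin (n+2) → ℕ} {f : Fin (n+2) → Fin (n+2) → ℕ}
    (hf : IsFlow (n+1) ⊤ a f) (i : Fin (n+2)) : f i (Fin.last (n+1)) = 0 := by
  by_contra h
  exact absurd (hf.1 i _ h).1 (Fin.le_last i).not_gt

lemma flow_top_last_row {n : ℕ} {a : Fin (n+2) → ℕ} {f : Fin (n+2) → Fin (n+2) → ℕ}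
    (hf : IsFlow (n+1) ⊤ a f) :
    ∑ j : Fin (n+1), f (Fin.last (n+1)) j.castSucc = a (Fin.last (n+1)) := by
  have h := hf.2 (Fin.last (n+1)) (last_ne_zero n)
  rw [Fin.sum_univ_castSucc (f := fun j => f (Fin.last (n+1)) j)] at h
  have h2 : ∑ j, f j (Fin.last (n+1)) = 0 :=
    Finset.sum_eq_zero fun j _ => flow_top_last_col hf j
  have h3 := flow_top_last_col hf (Fin.last (n+1))
  rw [h2, h3] at h
  omega

lemma flow_restrict {n : ℕ} {a : Fin (n+2) → ℕ} {f : Fin (n+2) → Fin (n+2) → ℕ}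
    (hf : IsFlow (n+1) ⊤ a f) :
    IsFlow n ⊤ (fun j => a j.castSucc + f (Fin.last (n+1)) j.castSucc)
      (fun i j => f i.castSucc j.castSucc) := by
  constructor
  · intro i j h
    obtain ⟨hlt, -⟩ := hf.1 _ _ h
    have hji : j < i := by rwa [Fin.castSucc_lt_castSucc_iff] at hlt
    exact ⟨hji, by simp [hji.ne']⟩
  · intro i hi
    have hcs : i.castSucc ≠ 0 := by
      simpa [Fin.castSucc_eq_zero_iff] using hi
    have h := hf.2 i.castSucc hcs
    rw [Fin.sum_univ_castSucc (f := fun j => f i.castSucc j),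
        Fin.sum_univ_castSucc (f := fun j => f j i.castSucc)] at h
    dsimp only at h ⊢
    have h2 := flow_top_last_col hf i.castSucc
    omega

lemma flow_extend {n : ℕ} (a : Fin (n+2) → ℕ) (c : Fin (n+1) → ℕ)
    (f' : Fin (n+1) → Fin (n+1) → ℕ)
    (hc : ∑ j, c j = a (Fin.last (n+1)))
    (hf' : IsFlow n ⊤ (fun j => a j.castSucc + c j) f') :
    IsFlow (n+1) ⊤ a (fun i j => Fin.lastCases (Fin.lastCases 0 c j)
      (fun i' => Fin.lastCases 0 (f' i') j) i) := by
  constructor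
  · intro i j h
    induction i using Fin.lastCases with
    | last =>
      induction j using Fin.lastCases with
      | last => simp at h
      | cast j' =>
        simp only [Fin.lastCases_last, Fin.lastCases_castSucc] at h
        exact ⟨Fin.castSucc_lt_last j', by simp [(Fin.castSucc_lt_last j').ne']⟩
    | cast i' =>
      induction j using Fin.lastCases with
      | last => simp at h
      | cast j' =>
        simp only [Fin.lastCases_castSucc] at h
        obtain ⟨hlt, -⟩ := hf'.1 _ _ h
        have hji : j'.castSucc < i'.castSucc := Fin.castSucc_lt_castSucc_iff.mpr hlt
        exact ⟨hji, by simp [hji.ne']⟩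
  · intro i hi
    induction i using Fin.lastCases with
    | last =>
      dsimp only
      have h1 : ∑ j : Fin (n+2), (Fin.lastCases (Fin.lastCases 0 c j)
          (fun i' => Fin.lastCases 0 (f' i') j) (Fin.last (n+1)) : ℕ)
          = a (Fin.last (n+1)) := by
        simp only [Fin.lastCases_last]
        rw [Fin.sum_univ_castSucc (f := fun j : Fin (n+2) => (Fin.lastCases 0 c j : ℕ))]
        simp only [Fin.lastCases_castSucc, Fin.lastCases_last]
        omega
      have h2 : ∑ j : Fin (n+2), (Fin.lastCases (Fin.lastCases 0 c (Fin.last (n+1)))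
          (fun i' => Fin.lastCases 0 (f' i') (Fin.last (n+1))) j : ℕ) = 0 := by
        refine Finset.sum_eq_zero fun j _ => ?_
        induction j using Fin.lastCases with
        | last => simp
        | cast j' => simp
      rw [h1, h2]
      omega
    | cast i' =>
      dsimp only
      have hi' : i' ≠ 0 := by
        intro h
        rw [h] at hi
        exact hi (by simp)
      have hcons := hf'.2 i' hi'
      dsimp only at hcons
      have h1 : ∑ j : Fin (n+2), (Fin.lastCases (Fin.lastCases 0 c j)
          (fun k => Fin.lastCases 0 (f' k) j) i'.castSucc : ℕ)
          = ∑ j : Fin (n+1), f' i' j := by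
        simp only [Fin.lastCases_castSucc]
        rw [Fin.sum_univ_castSucc (f := fun j : Fin (n+2) => (Fin.lastCases 0 (f' i') j : ℕ))]
        simp only [Fin.lastCases_castSucc, Fin.lastCases_last]
        omega
      have h2 : ∑ j : Fin (n+2), (Fin.lastCases (Fin.lastCases 0 c i'.castSucc)
          (fun k => Fin.lastCases 0 (f' k) i'.castSucc) j : ℕ)
          = ∑ j : Fin (n+1), f' j i' + c i' := by
        rw [Fin.sum_univ_castSucc (f := fun j : Fin (n+2) =>
          (Fin.lastCases (Fin.lastCases 0 c i'.castSucc)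
            (fun k => Fin.lastCases 0 (f' k) i'.castSucc) j : ℕ))]
        simp only [Fin.lastCases_castSucc, Fin.lastCases_last]
      rw [h1, h2]
      omega

lemma main (n : ℕ) : ∀ a : Fin (n+1) → ℕ, (∀ i : Fin (n+1), i ≠ 0 → 0 < a i) →
    (X : Polynomial ℤ) ^ ((n+1).choose 2) * ∑ f ∈ (flows_finite n ⊤ a).toFinset, W n f
    = (X - 1) ^ n * X ^ (∑ i : Fin (n+1), (i : ℕ) * a i) * ∏ k ∈ Finset.range n, qnat (k+1) := by
  induction n with
  | zero =>
    intro a _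
    have hset : (flows_finite 0 ⊤ a).toFinset = {fun _ _ => 0} := by
      apply Finset.ext
      intro f
      rw [Set.Finite.mem_toFinset, Finset.mem_singleton]
      constructor
      · intro hf
        funext i j
        by_contra h
        have hlt := (hf.1 i j h).1
        rw [Fin.lt_def] at hlt
        have hi1 := i.isLt
        have hj1 := j.isLt
        omega
      · rintro rfl
        refine ⟨fun i j h => absurd rfl h, fun i hi => absurd (Fin.ext ?_ : i = 0) hi⟩
        have := i.isLt
        omega
    rw [hset, Finset.sum_singleton]
    simp [W, gE, qnat, Fin.sum_univ_one]
  | succ n ih =>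
    intro a ha
    have hlastne : (Fin.last (n+1) : Fin (n+2)) ≠ 0 := last_ne_zero n
    obtain ⟨p, hp⟩ : ∃ p, a (Fin.last (n+1)) = p + 1 :=
      ⟨a (Fin.last (n+1)) - 1, by have := ha _ hlastne; omega⟩
    have hbij : ∑ f ∈ (flows_finite (n+1) ⊤ a).toFinset, W (n+1) f
        = ∑ c ∈ Finset.Nat.antidiagonalTuple (n+1) (a (Fin.last (n+1))),
            (∏ j : Fin (n+1), gE (c j)) *
              ∑ f' ∈ (flows_finite n ⊤ (fun j => a j.castSucc + c j)).toFinset, W n f' := by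
      have h1 : ∑ x ∈ (Finset.Nat.antidiagonalTuple (n+1) (a (Fin.last (n+1)))).sigma
            (fun c => (flows_finite n ⊤ (fun j => a j.castSucc + c j)).toFinset),
            (∏ j : Fin (n+1), gE (x.1 j)) * W n x.2
          = ∑ c ∈ Finset.Nat.antidiagonalTuple (n+1) (a (Fin.last (n+1))),
            (∏ j : Fin (n+1), gE (c j)) *
              ∑ f' ∈ (flows_finite n ⊤ (fun j => a j.castSucc + c j)).toFinset, W n f' := by
        rw [Finset.sum_sigma]
        exact Finset.sum_congr rfl fun c _ => by rw [Finset.mul_sum]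
      rw [← h1]
      refine Finset.sum_nbij'
        (fun f => (⟨fun j => f (Fin.last (n+1)) j.castSucc,
          fun i j => f i.castSucc j.castSucc⟩ :
          (_ : Fin (n+1) → ℕ) × (Fin (n+1) → Fin (n+1) → ℕ)))
        (fun x i j => Fin.lastCases (Fin.lastCases 0 x.1 j)
          (fun i' => Fin.lastCases 0 (x.2 i') j) i)
        ?_ ?_ ?_ ?_ ?_
      · intro f hfmem
        have hf : IsFlow (n+1) ⊤ a f := by rwa [Set.Finite.mem_toFinset] at hfmem
        rw [Finset.mem_sigma]
        refine ⟨?_, ?_⟩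
        · rw [Finset.Nat.mem_antidiagonalTuple]
          exact flow_top_last_row hf
        · rw [Set.Finite.mem_toFinset]
          exact flow_restrict hf
      · rintro ⟨c, f'⟩ hx
        rw [Finset.mem_sigma] at hx
        obtain ⟨hc, hf'⟩ := hx
        rw [Finset.Nat.mem_antidiagonalTuple] at hc
        rw [Set.Finite.mem_toFinset] at hf'
        rw [Set.Finite.mem_toFinset]
        exact flow_extend a c f' hc hf'
      · intro f hfmem
        have hf : IsFlow (n+1) ⊤ a f := by rwa [Set.Finite.mem_toFinset] at hfmem
        funext i j
        induction i using Fin.lastCases with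
        | last =>
          induction j using Fin.lastCases with
          | last => simp [flow_top_last_col hf]
          | cast j' => simp
        | cast i' =>
          induction j using Fin.lastCases with
          | last => simp [flow_top_last_col hf]
          | cast j' => simp
      · rintro ⟨c, f'⟩ _
        refine Sigma.ext ?_ (heq_of_eq ?_)
        · funext j; simp
        · funext i j; simp
      · intro f hfmem
        have hf : IsFlow (n+1) ⊤ a f := by rwa [Set.Finite.mem_toFinset] at hfmem
        have hinner : ∀ i, ∏ j, gE (f i j) = ∏ j : Fin (n+1), gE (f i j.castSucc) := by
          intro i
          rw [Fin.prod_univ_castSucc (f := fun j => gE (f i j)), flow_top_last_col hf i,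
            gE_zero, mul_one]
        show W (n+1) f = _
        unfold W
        simp_rw [hinner]
        rw [Fin.prod_univ_castSucc
          (f := fun i : Fin (n+2) => ∏ j : Fin (n+1), gE (f i j.castSucc))]
        rw [mul_comm]
    have hch : (n+2).choose 2 = (n+1).choose 2 + (n+1) := by
      have h : (n+2).choose 2 = (n+1).choose 1 + (n+1).choose 2 :=
        Nat.choose_succ_succ (n+1) 1
      rw [Nat.choose_one_right] at h
      omega
    rw [hbij, hch, pow_add, Finset.mul_sum]
    have hper : ∀ c ∈ Finset.Nat.antidiagonalTuple (n+1) (a (Fin.last (n+1))),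
        ((X : Polynomial ℤ) ^ ((n+1).choose 2) * X ^ (n+1)) *
          ((∏ j : Fin (n+1), gE (c j)) *
            ∑ f' ∈ (flows_finite n ⊤ (fun j => a j.castSucc + c j)).toFinset, W n f')
        = ((X - 1) ^ n * X ^ (∑ j : Fin (n+1), (j : ℕ) * a j.castSucc)
            * ∏ k ∈ Finset.range n, qnat (k+1))
          * (X ^ (n+1) *
            ∏ j : Fin (n+1), (if 0 < c j then (X - 1) * X ^ (c j - 1 + (j : ℕ) * c j) else 1)) := by
      intro c hc
      have hpos : ∀ j : Fin (n+1), j ≠ 0 → 0 < a j.castSucc + c j := by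
        intro j hj
        have hj' : j.castSucc ≠ 0 := by
          simpa [Fin.castSucc_eq_zero_iff] using hj
        have := ha _ hj'
        omega
      have hih := ih (fun j => a j.castSucc + c j) hpos
      have hsum : ∑ j : Fin (n+1), (j : ℕ) * (a j.castSucc + c j)
          = (∑ j : Fin (n+1), (j : ℕ) * a j.castSucc) + ∑ j : Fin (n+1), (j : ℕ) * c j := by
        rw [← Finset.sum_add_distrib]
        exact Finset.sum_congr rfl fun j _ => by ring
      rw [hsum, pow_add] at hih
      have hgE : (∏ j : Fin (n+1), gE (c j)) * X ^ (∑ j : Fin (n+1), (j : ℕ) * c j)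
          = ∏ j : Fin (n+1), (if 0 < c j then (X - 1) * X ^ (c j - 1 + (j : ℕ) * c j) else 1) := by
        rw [← Finset.prod_pow_eq_pow_sum, ← Finset.prod_mul_distrib]
        refine Finset.prod_congr rfl fun j _ => ?_
        by_cases h : 0 < c j
        · rw [gE, if_pos h, if_pos h, pow_add]
          ring
        · have h0 : c j = 0 := by omega
          simp [gE, h0]
      calc ((X : Polynomial ℤ) ^ ((n+1).choose 2) * X ^ (n+1)) *
            ((∏ j : Fin (n+1), gE (c j)) *
              ∑ f' ∈ (flows_finite n ⊤ (fun j => a j.castSucc + c j)).toFinset, W n f')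
          = X ^ (n+1) * ((∏ j : Fin (n+1), gE (c j)) *
              (X ^ ((n+1).choose 2) *
                ∑ f' ∈ (flows_finite n ⊤ (fun j => a j.castSucc + c j)).toFinset, W n f')) := by
            ring
        _ = X ^ (n+1) * ((∏ j : Fin (n+1), gE (c j)) *
              ((X - 1) ^ n * (X ^ (∑ j : Fin (n+1), (j : ℕ) * a j.castSucc)
                * X ^ (∑ j : Fin (n+1), (j : ℕ) * c j))
                * ∏ k ∈ Finset.range n, qnat (k+1))) := by
            rw [hih]
        _ = ((X - 1) ^ n * X ^ (∑ j : Fin (n+1), (j : ℕ) * a j.castSucc)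
              * ∏ k ∈ Finset.range n, qnat (k+1))
            * (X ^ (n+1) * ((∏ j : Fin (n+1), gE (c j))
              * X ^ (∑ j : Fin (n+1), (j : ℕ) * c j))) := by
            ring
        _ = _ := by rw [hgE]
    rw [Finset.sum_congr rfl hper, ← Finset.mul_sum, ← Finset.mul_sum,
      keyIdent (n+1) (a (Fin.last (n+1))) (by omega)]
    have hsplitsum : ∑ i : Fin (n+2), (i : ℕ) * a i
        = (∑ j : Fin (n+1), (j : ℕ) * a j.castSucc) + (n+1) * a (Fin.last (n+1)) := by
      rw [Fin.sum_univ_castSucc (f := fun i : Fin (n+2) => (i : ℕ) * a i)]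
      simp
    rw [hsplitsum, hp, Nat.add_sub_cancel, Finset.prod_range_succ]
    have e1 : (∑ j : Fin (n+1), (j : ℕ) * a j.castSucc) + (n+1) * (p+1)
        = (∑ j : Fin (n+1), (j : ℕ) * a j.castSucc) + ((n+1) * p + (n+1)) := by ring
    rw [e1, pow_add, pow_add, pow_add]
    ring


lemma Ehr0_top (n : ℕ) (a : Fin (n+1) → ℕ) (ha : ∀ i : Fin (n+1), i ≠ 0 → 0 < a i) :
    Ehr0 n ⊤ a = (X : Polynomial ℤ) ^ ((∑ i : Fin (n+1), (i : ℕ) * a i) - (n+1).choose 2) *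
      ∏ k ∈ Finset.range n, qnat (k+1) := by
  classical
  have hE : Ehr0 n ⊤ a = ∑ f ∈ (flows_finite n ⊤ a).toFinset,
      (X - 1 : Polynomial ℤ) ^ (posCount n f - n)
        * ∏ i, ∏ j, (if 0 < f i j then X ^ (f i j - 1) else 1) := by
    unfold Ehr0
    exact finsum_mem_eq_finite_toFinset_sum _ (flows_finite n ⊤ a)
  have hW : ∑ f ∈ (flows_finite n ⊤ a).toFinset, W n f
      = (X - 1) ^ n * Ehr0 n ⊤ a := by
    rw [hE, Finset.mul_sum]
    refine Finset.sum_congr rfl fun f hf => ?_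
    have hf' : IsFlow n ⊤ a f := by rwa [Set.Finite.mem_toFinset] at hf
    have hle := le_posCount hf' ha
    rw [W_eq, ← mul_assoc, ← pow_add]
    congr 2
    omega
  have hC : (n+1).choose 2 ≤ ∑ i : Fin (n+1), (i : ℕ) * a i := by
    have h1 : ∑ i : Fin (n+1), (i : ℕ) ≤ ∑ i : Fin (n+1), (i : ℕ) * a i :=
      Finset.sum_le_sum fun i _ => by
        rcases eq_or_ne i 0 with rfl | hi
        · simp
        · exact Nat.le_mul_of_pos_right _ (ha i hi)
    have h2 : ∑ i : Fin (n+1), (i : ℕ) = (n+1).choose 2 := by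
      rw [Fin.sum_univ_eq_sum_range (fun i => i) (n+1)]
      have h3 := Finset.sum_range_id_mul_two (n+1)
      have h4 := Nat.choose_two_right (n+1)
      omega
    omega
  have hmain := main n a ha
  rw [hW] at hmain
  have hne : ((X : Polynomial ℤ) ^ ((n+1).choose 2) * (X - 1) ^ n) ≠ 0 :=
    mul_ne_zero (pow_ne_zero _ Polynomial.X_ne_zero) (pow_ne_zero _ X_sub_one_ne_zero)
  apply mul_left_cancel₀ hne
  calc ((X : Polynomial ℤ) ^ ((n+1).choose 2) * (X - 1) ^ n) * Ehr0 n ⊤ a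
      = X ^ ((n+1).choose 2) * ((X - 1) ^ n * Ehr0 n ⊤ a) := by ring
    _ = (X - 1) ^ n * X ^ (∑ i : Fin (n+1), (i : ℕ) * a i)
          * ∏ k ∈ Finset.range n, qnat (k+1) := hmain
    _ = (X ^ ((n+1).choose 2) * (X - 1) ^ n) *
          (X ^ ((∑ i : Fin (n+1), (i : ℕ) * a i) - (n+1).choose 2) *
            ∏ k ∈ Finset.range n, qnat (k+1)) := by
        have hXX : (X : Polynomial ℤ) ^ ((n+1).choose 2) *
            X ^ ((∑ i : Fin (n+1), (i : ℕ) * a i) - (n+1).choose 2)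
            = X ^ (∑ i : Fin (n+1), (i : ℕ) * a i) := by
          rw [← pow_add]
          congr 1
          omega
        rw [← hXX]
        ring

end ThresholdFlow

namespace ThresholdFlow

theorem ehr_q0_complete (n : ℕ) (hn : 1 ≤ n) (a : Fin (n+1) → ℕ)
    (ha : ∀ i : Fin (n+1), i ≠ 0 → 0 < a i) :
    Ehr0 n ⊤ a =
      (X : Polynomial ℤ) ^ ((∑ i : Fin (n+1), (i : ℕ) * a i) - (n+1).choose 2) *
        ∏ k ∈ Finset.range n, qnat (k+1) ∧
    Ehr0 n (⊤ : SimpleGraph (Fin (n+1))) (fun _ => 1) = ∏ k ∈ Finset.range n, qnat (k+1) := by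
  constructor
  · exact Ehr0_top n a ha
  · have h := Ehr0_top n (fun _ => 1) (fun i _ => Nat.one_pos)
    rw [h]
    have h2 : (∑ i : Fin (n+1), (i : ℕ) * 1) - (n+1).choose 2 = 0 := by
      have h3 : ∑ i : Fin (n+1), (i : ℕ) * 1 = (n+1).choose 2 := by
        simp only [mul_one]
        rw [Fin.sum_univ_eq_sum_range (fun i => i) (n+1)]
        have h4 := Finset.sum_range_id_mul_two (n+1)
        have h5 := Nat.choose_two_right (n+1)
        omega
      omega
    rw [h2, pow_zero, one_mul]


end ThresholdFlow
end

section
/- Let G be a connected threshold graph on vertex set {0,1,…,n} (n≥1) labeled by reverse degree sequence. The number of increasing spanning trees of G (rooted at vertex 0) equals ∏_{i=1}^n d̄_i, where d̄_i = min{d_i, i} is the number of neighbors of vertex i that are smaller than i. -/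
open Finset Polynomial

namespace ThresholdFlow

theorem card_increasing_spanning_trees (n : ℕ) (hn : 1 ≤ n) (G : SimpleGraph (Fin (n+1)))
    (hG : IsThreshold n G) (hc : G.Connected) :
    Nat.card {p : Fin (n+1) → Fin (n+1) // IsSpanTree n G p ∧ IsIncr n p} =
      ∏ i ∈ Finset.univ.erase (0 : Fin (n+1)), dbar n G i := by
  classical
  have hiter : ∀ (p : Fin (n+1) → Fin (n+1)), p 0 = 0 →
      (∀ i, i ≠ 0 → p i < i) → ∀ k x, p^[k] x ≤ x := by
    intro p h0 hlt k
    induction k with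
    | zero => intro x; simp
    | succ k ih =>
      intro x
      rw [Function.iterate_succ_apply]
      refine le_trans (ih (p x)) ?_
      by_cases hx : x = 0
      · subst hx; rw [h0]
      · exact le_of_lt (hlt x hx)
  have key : ∀ p : Fin (n+1) → Fin (n+1),
      (IsSpanTree n G p ∧ IsIncr n p) ↔
      (∀ i : Fin (n+1), if i = 0 then p i = 0 else (p i < i ∧ G.Adj i (p i))) := by
    intro p
    constructor
    · rintro ⟨⟨h0, hadj, hreach⟩, hincr⟩ i
      by_cases hi : i = 0
      · simp [hi, h0]
      · simp only [hi, if_false]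
        refine ⟨?_, hadj i hi⟩
        rcases lt_trichotomy (p i) i with h | h | h
        · exact h
        · exfalso
          obtain ⟨k, hk⟩ := hreach i
          have hfix : ∀ m, p^[m] i = i := by
            intro m; induction m with
            | zero => rfl
            | succ m ih => rw [Function.iterate_succ_apply', ih, h]
          exact hi (by rw [← hk, hfix k])
        · exfalso
          have hmem : ((p i, i)) ∈ invSet n p := by
            refine ⟨h, ?_, 1, rfl⟩
            intro hz
            have hz' : p i = 0 := hz
            rw [hz'] at h
            exact absurd h (Fin.not_lt.mpr (Fin.zero_le i))
          rw [IsIncr] at hincr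
          rw [hincr] at hmem
          exact hmem
    · intro h
      have h0 : p 0 = 0 := by have := h 0; simpa using this
      have hlt : ∀ i, i ≠ 0 → p i < i := by
        intro i hi; have := h i; rw [if_neg hi] at this; exact this.1
      have hadj : ∀ i, i ≠ 0 → G.Adj i (p i) := by
        intro i hi; have := h i; rw [if_neg hi] at this; exact this.2
      refine ⟨⟨h0, hadj, ?_⟩, ?_⟩
      · have hm : ∀ m : ℕ, ∀ i : Fin (n+1), i.val ≤ m → ∃ k, p^[k] i = 0 := by
          intro m
          induction m with
          | zero =>
            intro i hi
            exact ⟨0, by ext; simpa using Nat.le_zero.mp hi⟩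
          | succ m ih =>
            intro i hi
            by_cases h0' : i = 0
            · exact ⟨0, h0'⟩
            · obtain ⟨k, hk⟩ := ih (p i) (by
                have := hlt i h0'
                rw [Fin.lt_def] at this
                omega)
              exact ⟨k + 1, by rw [Function.iterate_succ_apply, hk]⟩
        intro i; exact hm i.val i le_rfl
      · rw [IsIncr]
        ext pr
        simp only [Set.mem_empty_iff_false, iff_false]
        rintro ⟨hji, hi0, k, hk⟩
        have hle : p^[k] pr.2 ≤ pr.2 := hiter p h0 hlt k pr.2
        rw [hk] at hle
        exact absurd hji (not_lt.mpr hle)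
  have e1 : {p : Fin (n+1) → Fin (n+1) // IsSpanTree n G p ∧ IsIncr n p} ≃
      ∀ i : Fin (n+1), {x : Fin (n+1) // if i = 0 then x = 0 else (x < i ∧ G.Adj i x)} :=
    (Equiv.subtypeEquivRight key).trans (Equiv.subtypePiEquivPi (p := fun i x => if i = 0 then x = 0 else (x < i ∧ G.Adj i x)))
  rw [Nat.card_congr e1, Nat.card_pi]
  rw [← Finset.mul_prod_erase Finset.univ _ (Finset.mem_univ (0 : Fin (n+1)))]
  have g0 : Nat.card {x : Fin (n+1) // if (0 : Fin (n+1)) = 0 then x = 0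
      else (x < 0 ∧ G.Adj 0 x)} = 1 := by
    have hiff : ∀ x : Fin (n+1),
        (if (0 : Fin (n+1)) = 0 then x = 0 else (x < 0 ∧ G.Adj 0 x)) ↔ x = 0 := by
      intro x; rw [if_pos rfl]
    rw [Nat.card_congr (Equiv.subtypeEquivRight hiff)]
    haveI : Unique {x : Fin (n+1) // x = 0} := ⟨⟨⟨0, rfl⟩⟩, fun a => Subtype.ext a.2⟩
    exact Nat.card_unique
  rw [g0, one_mul]
  refine Finset.prod_congr rfl ?_
  intro i hi
  have hi0 : i ≠ 0 := (Finset.mem_erase.mp hi).1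
  simp only [if_neg hi0]
  rw [dbar]
  exact Nat.card_coe_set_eq _

end ThresholdFlow
end

section
/- Let G be a connected threshold graph on vertex set {0,1,…,n} (n≥1) labeled by reverse degree sequence, with degree sequence (d_0,d_1,…,d_n). The number of spanning trees of G equals ∏_{i : 0<i<d_i} (d_i+1) · ∏_{i : d_i<i} d_i, where both products range over vertices i∈{1,…,n}. -/
open Finset Polynomial

namespace ThresholdFlow

open Function


def Stab {α : Type*} (p : α → α) (a : α) : Prop := ∃ k, p^[k+1] a = p^[k] a

lemma stab_of_reach {α : Type*} {p : α → α} {a r : α} {k : ℕ} (h : p^[k] a = r)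
    (hr : p r = r) : Stab p a :=
  ⟨k, by rw [Function.iterate_succ_apply', h, hr]⟩

open Classical in
noncomputable def root {α : Type*} (p : α → α) (a : α) : α :=
  if h : Stab p a then p^[Nat.find h] a else a

lemma root_fix {α : Type*} {p : α → α} {a : α} (h : Stab p a) : p (root p a) = root p a := by
  classical
  rw [root, dif_pos h]
  have := Nat.find_spec h
  rwa [Function.iterate_succ_apply'] at this

lemma root_reach {α : Type*} {p : α → α} {a : α} (h : Stab p a) :
    ∃ k, p^[k] a = root p a := by
  classical
  exact ⟨Nat.find h, by rw [root, dif_pos h]⟩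

lemma root_eq_of_reach {α : Type*} {p : α → α} {a r : α} {k : ℕ} (h : p^[k] a = r)
    (hr : p r = r) : root p a = r := by
  have hs : Stab p a := stab_of_reach h hr
  rcases root_reach hs with ⟨K, hK⟩
  rcases le_total k K with hkK | hKk
  · have h2 : p^[K] a = r := by
      rw [← Nat.sub_add_cancel hkK, Function.iterate_add_apply, h, Function.iterate_fixed hr]
    rw [← hK, h2]
  · have h2 : p^[k] a = root p a := by
      rw [← Nat.sub_add_cancel hKk, Function.iterate_add_apply, hK,
        Function.iterate_fixed (root_fix hs)]
    rw [← h, h2]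

lemma root_eq_self {α : Type*} {p : α → α} {a : α} (h : p a = a) : root p a = a :=
  root_eq_of_reach (k := 0) rfl h

lemma fix_of_periodic {α : Type*} {p : α → α} {a : α} {k : ℕ} (h : p^[k] a = a)
    (hk : k ≠ 0) (hs : Stab p a) : p a = a := by
  rcases root_reach hs with ⟨K, hK⟩
  have hmul : ∀ t, p^[k * t] a = a := by
    intro t
    rw [Function.iterate_mul]
    exact Function.iterate_fixed h t
  have hge : K ≤ k * (K + 1) := by
    calc K ≤ K + 1 := Nat.le_succ K
    _ ≤ k * (K+1) := Nat.le_mul_of_pos_left _ (Nat.pos_of_ne_zero hk)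
  have hfix := root_fix hs
  have heq : a = root p a := by
    conv_lhs => rw [← hmul (K + 1)]
    rw [← Nat.sub_add_cancel hge, Function.iterate_add_apply, hK,
      Function.iterate_fixed hfix]
  rw [← heq] at hfix
  exact hfix

lemma stab_of_stab_apply {α : Type*} {p : α → α} {a : α} (h : Stab p (p a)) : Stab p a := by
  rcases h with ⟨k, hk⟩
  exact ⟨k + 1, by rw [Function.iterate_succ_apply, Function.iterate_succ_apply]; exact hk⟩

lemma root_apply {α : Type*} {p : α → α} {a : α} (h : Stab p a) :
    root p (p a) = root p a := by
  rcases root_reach h with ⟨K, hK⟩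
  rcases Nat.eq_zero_or_pos K with rfl | hpos
  · simp only [Function.iterate_zero, id_eq] at hK
    have hra : root p a = a := hK.symm
    have hfix := root_fix h
    rw [hra] at hfix
    rw [hfix]
  · have hK' : K - 1 + 1 = K := Nat.sub_add_cancel hpos
    rw [← hK', Function.iterate_succ_apply] at hK
    exact root_eq_of_reach hK (root_fix h)



open Classical in
noncomputable def Forests (m : ℕ) (H : SimpleGraph (Fin m)) : Finset (Fin m → Fin m) :=
  Finset.univ.filter fun p => (∀ i, p i = i ∨ H.Adj i (p i)) ∧ ∀ i, Stab p i

lemma mem_Forests {m : ℕ} {H : SimpleGraph (Fin m)} {p : Fin m → Fin m} :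
    p ∈ Forests m H ↔ (∀ i, p i = i ∨ H.Adj i (p i)) ∧ ∀ i, Stab p i := by
  classical
  simp [Forests]

noncomputable def fixc {m : ℕ} (p : Fin m → Fin m) : ℕ :=
  (Finset.univ.filter fun i => p i = i).card

noncomputable def fwt (m : ℕ) (H : SimpleGraph (Fin m)) (x : ℕ) : ℕ :=
  ∑ p ∈ Forests m H, x ^ fixc p

def restCast (m : ℕ) (H : SimpleGraph (Fin (m+1))) : SimpleGraph (Fin m) where
  Adj i j := H.Adj i.castSucc j.castSucc
  symm := ⟨fun i j h => H.adj_symm h⟩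
  loopless := ⟨fun i h => H.irrefl h⟩

def restSucc (m : ℕ) (H : SimpleGraph (Fin (m+1))) : SimpleGraph (Fin m) where
  Adj i j := H.Adj i.succ j.succ
  symm := ⟨fun i j h => H.adj_symm h⟩
  loopless := ⟨fun i h => H.irrefl h⟩

lemma mirror_castSucc {m : ℕ} {p : Fin (m+1) → Fin (m+1)} {q : Fin m → Fin m}
    (hrel : ∀ i : Fin m, p i.castSucc = (q i).castSucc) :
    ∀ (k : ℕ) (i : Fin m), p^[k] i.castSucc = (q^[k] i).castSucc := by
  intro k
  induction k with
  | zero => intro i; simp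
  | succ k ih =>
    intro i
    rw [Function.iterate_succ_apply, Function.iterate_succ_apply, hrel i, ih (q i)]

lemma stab_of_mirror_castSucc {m : ℕ} {p : Fin (m+1) → Fin (m+1)} {q : Fin m → Fin m}
    (hrel : ∀ i : Fin m, p i.castSucc = (q i).castSucc) {i : Fin m}
    (h : Stab p i.castSucc) : Stab q i := by
  rcases h with ⟨k, hk⟩
  rw [mirror_castSucc hrel, mirror_castSucc hrel] at hk
  exact ⟨k, Fin.castSucc_injective _ hk⟩

lemma card_filter_last {m : ℕ} (P : Fin (m+1) → Prop) [DecidablePred P] :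
    (univ.filter P).card
      = (if P (Fin.last m) then 1 else 0) + (univ.filter fun i : Fin m => P i.castSucc).card := by
  rw [Fin.univ_castSuccEmb, filter_cons, apply_ite Finset.card, card_cons, filter_map, card_map]
  split_ifs with h
  · rw [Nat.add_comm]; rfl
  · rw [Nat.zero_add]; rfl

lemma card_filter_zero {m : ℕ} (P : Fin (m+1) → Prop) [DecidablePred P] :
    (univ.filter P).card
      = (if P 0 then 1 else 0) + (univ.filter fun i : Fin m => P i.succ).card := by
  rw [Fin.univ_succ, filter_cons, apply_ite Finset.card, card_cons, filter_map, card_map]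
  split_ifs with h
  · rw [Nat.add_comm]; rfl
  · rw [Nat.zero_add]; rfl

lemma fwt_isolated (m : ℕ) (H : SimpleGraph (Fin (m+1)))
    (hiso : ∀ j, ¬ H.Adj (Fin.last m) j) (x : ℕ) :
    fwt (m+1) H x = x * fwt m (restCast m H) x := by
  classical
  set H'' := restCast m H
  -- forward and backward maps
  set Φ : (Fin (m+1) → Fin (m+1)) → (Fin m → Fin m) := fun p i =>
    if h : p i.castSucc = Fin.last m then i else (p i.castSucc).castPred h with hΦ
  set Θ : (Fin m → Fin m) → (Fin (m+1) → Fin (m+1)) := fun q =>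
    fun v => Fin.lastCases (Fin.last m) (fun i => (q i).castSucc) v with hΘ
  have keyA : ∀ p ∈ Forests (m+1) H, p (Fin.last m) = Fin.last m := by
    intro p hp
    rcases (mem_Forests.mp hp).1 (Fin.last m) with h | h
    · exact h
    · exact absurd h (hiso _)
  have keyB : ∀ p ∈ Forests (m+1) H, ∀ i : Fin m, p i.castSucc ≠ Fin.last m := by
    intro p hp i hc
    rcases (mem_Forests.mp hp).1 i.castSucc with h | h
    · rw [hc] at h; exact absurd h.symm (Fin.castSucc_lt_last i).ne
    · rw [hc] at h; exact hiso _ (H.adj_symm h)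
  have keyRel : ∀ p ∈ Forests (m+1) H, ∀ i : Fin m, p i.castSucc = ((Φ p) i).castSucc := by
    intro p hp i
    rw [hΦ]
    simp only [dif_neg (keyB p hp i)]
    rw [Fin.castSucc_castPred]
  have hPhiMem : ∀ p ∈ Forests (m+1) H, Φ p ∈ Forests m H'' := by
    intro p hp
    rcases mem_Forests.mp hp with ⟨hloc, hstab⟩
    refine mem_Forests.mpr ⟨fun i => ?_, fun i => ?_⟩
    · rcases hloc i.castSucc with h | h
      · left
        apply Fin.castSucc_injective
        rw [← keyRel p hp i, h]
      · right
        show H.Adj i.castSucc ((Φ p i).castSucc)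
        rw [← keyRel p hp i]
        exact h
    · exact stab_of_mirror_castSucc (keyRel p hp) (hstab i.castSucc)
  have hΘmem : ∀ q ∈ Forests m H'', Θ q ∈ Forests (m+1) H := by
    intro q hq
    rcases mem_Forests.mp hq with ⟨hloc, hstab⟩
    have hrel : ∀ i : Fin m, (Θ q) i.castSucc = ((q) i).castSucc := by
      intro i; rw [hΘ]; simp
    refine mem_Forests.mpr ⟨fun v => ?_, fun v => ?_⟩
    · refine Fin.lastCases ?_ (fun i => ?_) v
      · left; rw [hΘ]; simp
      · rcases hloc i with h | h
        · left; rw [hrel i, h]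
        · right; rw [hrel i]; exact h
    · refine Fin.lastCases ?_ (fun i => ?_) v
      · refine stab_of_reach (k := 0) rfl ?_
        rw [hΘ]; simp
      · rcases hstab i with ⟨k, hk⟩
        refine ⟨k, ?_⟩
        rw [mirror_castSucc hrel, mirror_castSucc hrel, hk]
  have hfix : ∀ p ∈ Forests (m+1) H, fixc p = fixc (Φ p) + 1 := by
    intro p hp
    rw [fixc, card_filter_last (fun v => p v = v), if_pos (keyA p hp)]
    rw [Nat.add_comm]
    congr 1
    rw [fixc]
    congr 1
    apply filter_congr
    intro i _
    rw [keyRel p hp i]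
    exact ⟨fun h => Fin.castSucc_injective _ h, fun h => by rw [h]⟩
  rw [fwt, fwt, Finset.mul_sum]
  refine Finset.sum_nbij' Φ Θ hPhiMem hΘmem ?_ ?_ ?_
  · intro p hp
    funext v
    refine Fin.lastCases ?_ (fun i => ?_) v
    · rw [hΘ]; simp [keyA p hp]
    · rw [hΘ]
      simp only [Fin.lastCases_castSucc]
      rw [← keyRel p hp i]
  · intro q hq
    funext i
    have hv : (Θ q) i.castSucc = (q i).castSucc := by rw [hΘ]; simp
    have hne : (Θ q) i.castSucc ≠ Fin.last m := by
      rw [hv]; exact (Fin.castSucc_lt_last _).ne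
    show (if h : (Θ q) i.castSucc = Fin.last m then i else ((Θ q) i.castSucc).castPred h) = q i
    rw [dif_neg hne]
    apply Fin.castSucc_injective
    rw [Fin.castSucc_castPred, hv]
  · intro p hp
    rw [hfix p hp, pow_succ, Nat.mul_comm]
noncomputable def FixS {m : ℕ} (q : Fin m → Fin m) : Finset (Fin m) :=
  Finset.univ.filter fun i => q i = i

lemma mem_FixS {m : ℕ} {q : Fin m → Fin m} {i : Fin m} : i ∈ FixS q ↔ q i = i := by
  simp [FixS]

lemma root_mem_FixS {m : ℕ} {q : Fin m → Fin m} (h : ∀ i, Stab q i) (i : Fin m) :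
    root q i ∈ FixS q := mem_FixS.mpr (root_fix (h i))

lemma FixS_nonempty {m : ℕ} {q : Fin (m+1) → Fin (m+1)} (h : ∀ i, Stab q i) :
    (FixS q).Nonempty := ⟨root q 0, root_mem_FixS h 0⟩

/-- mirror transfer: if `p` on `Fin (m+1)` follows `q` (via `succ`) at non-fixed points of `q`,
then `p`-orbits reach the (succ of the) points reached by `q`-orbits at stabilization. -/
lemma reach_succ_of_qreach {m : ℕ} {p : Fin (m+1) → Fin (m+1)} {q : Fin m → Fin m}
    (hpq : ∀ i : Fin m, q i ≠ i → p i.succ = (q i).succ) :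
    ∀ (k : ℕ) (i : Fin m), q (q^[k] i) = q^[k] i → ∃ k', p^[k'] i.succ = (q^[k] i).succ := by
  intro k
  induction k with
  | zero => intro i h; exact ⟨0, rfl⟩
  | succ k ih =>
    intro i h
    by_cases hqi : q i = i
    · refine ⟨0, ?_⟩
      rw [Function.iterate_fixed hqi]
      rfl
    · rw [Function.iterate_succ_apply] at h ⊢
      rcases ih (q i) h with ⟨k', hk'⟩
      exact ⟨k' + 1, by rw [Function.iterate_succ_apply, hpq i hqi, hk']⟩

lemma reach_succ_root {m : ℕ} {p : Fin (m+1) → Fin (m+1)} {q : Fin m → Fin m}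
    (hpq : ∀ i : Fin m, q i ≠ i → p i.succ = (q i).succ) {i : Fin m} (hq : Stab q i) :
    ∃ k', p^[k'] i.succ = (root q i).succ := by
  rcases root_reach hq with ⟨K, hK⟩
  have h : q (q^[K] i) = q^[K] i := by rw [hK]; exact root_fix hq
  rcases reach_succ_of_qreach hpq K i h with ⟨k', hk'⟩
  rw [hK] at hk'
  exact ⟨k', hk'⟩

lemma stab_q_of_stab_p {m : ℕ} {p : Fin (m+1) → Fin (m+1)} {q : Fin m → Fin m}
    (hpq : ∀ i : Fin m, q i ≠ i → p i.succ = (q i).succ) :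
    ∀ (k : ℕ) (i : Fin m), p^[k+1] i.succ = p^[k] i.succ → Stab q i := by
  intro k
  induction k using Nat.strong_induction_on with
  | _ k ih =>
    intro i h
    by_cases hqi : q i = i
    · exact ⟨0, by simpa using hqi⟩
    · rcases Nat.eq_zero_or_pos k with rfl | hk
      · simp only [zero_add, Function.iterate_one, Function.iterate_zero, id_eq] at h
        rw [hpq i hqi] at h
        exact absurd (Fin.succ_injective _ h) hqi
      · have h' : p^[(k-1)+1] (q i).succ = p^[k-1] (q i).succ := by
          have e1 : p^[k+1] i.succ = p^[k] (p i.succ) := Function.iterate_succ_apply p k i.succ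
          have e2 : p^[k] i.succ = p^[k-1] (p i.succ) := by
            conv_lhs => rw [show k = k - 1 + 1 by omega]
            rw [Function.iterate_succ_apply]
          rw [e1, e2, hpq i hqi] at h
          rw [Nat.sub_add_cancel hk]
          exact h
        have := ih (k-1) (by omega) (q i) h'
        exact stab_of_stab_apply this
lemma stab_of_reach_stab {α : Type*} {p : α → α} {a b : α} {k : ℕ} (h : p^[k] a = b)
    (hb : Stab p b) : Stab p a := by
  rcases hb with ⟨l, hl⟩
  refine ⟨l + k, ?_⟩
  have e1 : p^[l + k + 1] a = p^[l+1] b := by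
    rw [show l + k + 1 = (l+1) + k by omega, Function.iterate_add_apply, h]
  have e2 : p^[l + k] a = p^[l] b := by
    rw [Function.iterate_add_apply, h]
  rw [e1, e2, hl]

lemma sum_powerset_pow {m : ℕ} (F : Finset (Fin m)) (x : ℕ) :
    ∑ S ∈ F.powerset, x ^ (F.card - S.card) = (x+1) ^ F.card := by
  classical
  calc ∑ S ∈ F.powerset, x ^ (F.card - S.card)
      = ∑ S ∈ F.powerset, x ^ (F \ S).card := by
        refine Finset.sum_congr rfl fun S hS => ?_
        rw [Finset.card_sdiff_of_subset (Finset.mem_powerset.mp hS)]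
    _ = ∏ _i ∈ F, (1 + x) := by
        rw [Finset.prod_add]
        refine Finset.sum_congr rfl fun S _ => ?_
        simp [Finset.prod_const]
    _ = (x+1) ^ F.card := by rw [Finset.prod_const, add_comm]

noncomputable def tbF {m : ℕ} (q : Fin m → Fin m) : Option (Fin m) → Finset (Fin m) :=
  fun t => t.elim ∅ (fun u => {root q u})

noncomputable def fibF {m : ℕ} (q : Fin m → Fin m) :
    Finset ((_ : Option (Fin m)) × Finset (Fin m)) :=
  Finset.univ.sigma (fun t => (FixS q \ tbF q t).powerset)

noncomputable def gF (m x : ℕ) (a : (_ : Fin m → Fin m) × (_ : Option (Fin m)) × Finset (Fin m)) : ℕ :=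
  x ^ ((FixS a.1).card - a.2.2.card + (if a.2.1 = none then 1 else 0))

def PhiF {m : ℕ} (p : Fin (m+1) → Fin (m+1)) : Fin m → Fin m :=
  fun i => if h : p i.succ = 0 then i else (p i.succ).pred h

noncomputable def PsiF {m : ℕ} (p : Fin (m+1) → Fin (m+1)) :
    (_ : Fin m → Fin m) × (_ : Option (Fin m)) × Finset (Fin m) :=
  ⟨PhiF p, (if h : p 0 = 0 then none else some ((p 0).pred h)),
    Finset.univ.filter (fun i => p i.succ = 0)⟩

def ThetaF {m : ℕ} (a : (_ : Fin m → Fin m) × (_ : Option (Fin m)) × Finset (Fin m)) :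
    Fin (m+1) → Fin (m+1) :=
  fun v => Fin.cases (a.2.1.elim 0 Fin.succ)
    (fun i => if i ∈ a.2.2 then 0 else ((a.1 i).succ)) v

lemma PhiF_of_zero {m : ℕ} {p : Fin (m+1) → Fin (m+1)} {i : Fin m} (h : p i.succ = 0) :
    PhiF p i = i := dif_pos h

lemma PhiF_succ {m : ℕ} (p : Fin (m+1) → Fin (m+1)) (i : Fin m) (hne : PhiF p i ≠ i) :
    p i.succ = (PhiF p i).succ := by
  by_cases h : p i.succ = 0
  · exact absurd (PhiF_of_zero h) hne
  · simp only [PhiF, dif_neg h, Fin.succ_pred]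

lemma PhiF_of_fix {m : ℕ} {p : Fin (m+1) → Fin (m+1)} {i : Fin m} (h : p i.succ = i.succ) :
    PhiF p i = i := by
  have hne : p i.succ ≠ 0 := by rw [h]; exact Fin.succ_ne_zero i
  simp only [PhiF, dif_neg hne]
  apply Fin.succ_injective
  rw [Fin.succ_pred, h]

lemma ThetaF_zero {m : ℕ} (a : (_ : Fin m → Fin m) × (_ : Option (Fin m)) × Finset (Fin m)) :
    ThetaF a 0 = a.2.1.elim 0 Fin.succ := rfl

lemma ThetaF_succ {m : ℕ} (a : (_ : Fin m → Fin m) × (_ : Option (Fin m)) × Finset (Fin m))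
    (i : Fin m) : ThetaF a i.succ = if i ∈ a.2.2 then 0 else ((a.1 i).succ) := by
  simp only [ThetaF, Fin.cases_succ]

lemma ThetaF_succ' {m : ℕ} (q : Fin m → Fin m) (t : Option (Fin m)) (S : Finset (Fin m))
    (i : Fin m) : ThetaF ⟨q, t, S⟩ i.succ = if i ∈ S then 0 else ((q i).succ) :=
  ThetaF_succ _ i

lemma ThetaF_zero_none {m : ℕ} (q : Fin m → Fin m) (S : Finset (Fin m)) :
    ThetaF ⟨q, none, S⟩ 0 = 0 := by
  rw [ThetaF_zero]
  rfl

lemma ThetaF_zero_some {m : ℕ} (q : Fin m → Fin m) (u : Fin m) (S : Finset (Fin m)) :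
    ThetaF ⟨q, some u, S⟩ 0 = u.succ := by
  rw [ThetaF_zero]
  rfl

lemma fwt_cone (m : ℕ) (H : SimpleGraph (Fin (m+1)))
    (hdom : ∀ v : Fin (m+1), v ≠ 0 → H.Adj v 0) (x : ℕ) :
    (x + 1) * fwt (m+1) H x = x * (x + m + 1) * fwt m (restSucc m H) (x + 1) := by
  classical
  set H' := restSucc m H with hH'
  set T : Finset ((_ : Fin m → Fin m) × (_ : Option (Fin m)) × Finset (Fin m)) :=
    (Forests m H').sigma fibF with hT
  -- membership of Psi
  have hΦmem : ∀ p ∈ Forests (m+1) H, PhiF p ∈ Forests m H' := by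
    intro p hp
    rcases mem_Forests.mp hp with ⟨hloc, hstab⟩
    refine mem_Forests.mpr ⟨fun i => ?_, fun i => ?_⟩
    · by_cases h0 : p i.succ = 0
      · left; exact PhiF_of_zero h0
      · rcases hloc i.succ with h | h
        · left; exact PhiF_of_fix h
        · by_cases hfx : PhiF p i = i
          · left; exact hfx
          · right
            show H.Adj i.succ ((PhiF p i).succ)
            rw [← PhiF_succ p i hfx]
            exact h
    · rcases hstab i.succ with ⟨k, hk⟩
      exact stab_q_of_stab_p (PhiF_succ p) k i hk
  have hΨmem : ∀ p ∈ Forests (m+1) H, PsiF p ∈ T := by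
    intro p hp
    rcases mem_Forests.mp hp with ⟨hloc, hstab⟩
    have hq := hΦmem p hp
    have hstabq := (mem_Forests.mp hq).2
    rw [hT, Finset.mem_sigma]
    simp only [PsiF]
    refine ⟨hq, ?_⟩
    rw [fibF, Finset.mem_sigma]
    refine ⟨Finset.mem_univ _, ?_⟩
    rw [Finset.mem_powerset]
    intro i hi
    rw [Finset.mem_filter] at hi
    have hips : p i.succ = 0 := hi.2
    rw [Finset.mem_sdiff]
    refine ⟨mem_FixS.mpr (PhiF_of_zero hips), ?_⟩
    show i ∉ tbF (PhiF p) (if h : p 0 = 0 then none else some ((p 0).pred h))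
    by_cases h00 : p 0 = 0
    · rw [dif_pos h00]
      exact Finset.notMem_empty i
    · rw [dif_neg h00]
      rw [tbF]
      simp only [Option.elim, Finset.mem_singleton]
      intro hiρ
      set u := (p 0).pred h00 with hu
      have hpu : p 0 = u.succ := (Fin.succ_pred _ _).symm
      rcases reach_succ_root (PhiF_succ p) (hstabq u) with ⟨k', hk'⟩
      rw [← hiρ] at hk'
      have hz : p^[k'+1] u.succ = 0 := by
        rw [Function.iterate_succ_apply', hk', hips]
      have hper : p^[k'+2] u.succ = u.succ := by
        rw [show k'+2 = (k'+1)+1 from rfl, Function.iterate_succ_apply', hz, hpu]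
      have hfixu : p u.succ = u.succ :=
        fix_of_periodic hper (by omega) (hstab u.succ)
      have hru : root (PhiF p) u = u := root_eq_self (PhiF_of_fix hfixu)
      rw [hru] at hiρ
      rw [← hiρ] at hfixu
      rw [hips] at hfixu
      exact (Fin.succ_ne_zero i) hfixu.symm
  -- membership of Theta
  have hΘmem : ∀ a ∈ T, ThetaF a ∈ Forests (m+1) H := by
    rintro ⟨q, t, S⟩ ha
    rw [hT, Finset.mem_sigma] at ha
    obtain ⟨hq, hfib⟩ := ha
    rw [fibF, Finset.mem_sigma] at hfib
    have hSsub : S ⊆ FixS q \ tbF q t := Finset.mem_powerset.mp hfib.2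
    have hSfix : ∀ i ∈ S, q i = i := fun i hi =>
      mem_FixS.mp (Finset.mem_sdiff.mp (hSsub hi)).1
    have hStb : ∀ i ∈ S, i ∉ tbF q t := fun i hi =>
      (Finset.mem_sdiff.mp (hSsub hi)).2
    rcases mem_Forests.mp hq with ⟨hqloc, hqstab⟩
    have hpq : ∀ i : Fin m, q i ≠ i → ThetaF ⟨q, t, S⟩ i.succ = (q i).succ := by
      intro i hqi
      rw [ThetaF_succ']
      exact if_neg (fun hiS => hqi (hSfix i hiS))
    have hfixedAt : ∀ ρ : Fin m, q ρ = ρ → ρ ∉ S → ThetaF ⟨q, t, S⟩ ρ.succ = ρ.succ := by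
      intro ρ h1 h2
      rw [ThetaF_succ', if_neg h2, h1]
    have hstab0 : Stab (ThetaF ⟨q, t, S⟩) 0 := by
      rcases t with _ | u
      · exact stab_of_reach (k := 0) (r := 0) rfl (by
          rw [ThetaF_zero_none])
      · have hρfix : q (root q u) = root q u := root_fix (hqstab u)
        have hρnS : root q u ∉ S := by
          intro hc
          refine hStb _ hc ?_
          rw [tbF]
          exact Finset.mem_singleton_self _
        have hfixp : ThetaF ⟨q, some u, S⟩ (root q u).succ = (root q u).succ := by
          rw [ThetaF_succ', if_neg hρnS, hρfix]
        rcases reach_succ_root hpq (hqstab u) with ⟨k', hk'⟩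
        have hreach : (ThetaF ⟨q, some u, S⟩)^[k'+1] 0 = (root q u).succ := by
          rw [Function.iterate_succ_apply, ThetaF_zero_some]
          exact hk'
        exact stab_of_reach hreach hfixp
    refine mem_Forests.mpr ⟨fun v => ?_, fun v => ?_⟩
    · refine Fin.cases ?_ (fun i => ?_) v
      · rcases t with _ | u
        · left
          exact ThetaF_zero_none q S
        · right
          rw [ThetaF_zero_some]
          exact (hdom u.succ (Fin.succ_ne_zero u)).symm
      · rw [ThetaF_succ']
        by_cases hiS : i ∈ S
        · rw [if_pos hiS]
          right
          exact hdom i.succ (Fin.succ_ne_zero i)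
        · rw [if_neg hiS]
          by_cases hqi : q i = i
          · left
            rw [hqi]
          · right
            rcases hqloc i with h | h
            · exact absurd h hqi
            · exact h
    · refine Fin.cases hstab0 (fun i => ?_) v
      rcases reach_succ_root hpq (hqstab i) with ⟨k', hk'⟩
      by_cases hρS : root q i ∈ S
      · have hz : (ThetaF ⟨q, t, S⟩)^[k'+1] i.succ = 0 := by
          rw [Function.iterate_succ_apply', hk', ThetaF_succ', if_pos hρS]
        exact stab_of_reach_stab hz hstab0
      · exact stab_of_reach hk' (hfixedAt _ (root_fix (hqstab i)) hρS)
  -- round trips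
  have hround1 : ∀ p ∈ Forests (m+1) H, ThetaF (PsiF p) = p := by
    intro p hp
    funext v
    refine Fin.cases ?_ (fun i => ?_) v
    · rw [ThetaF_zero]
      by_cases h : p 0 = 0
      · rw [show (PsiF p).2.1 = (if h : p 0 = 0 then none else some ((p 0).pred h)) from rfl,
          dif_pos h]
        exact h.symm
      · rw [show (PsiF p).2.1 = (if h : p 0 = 0 then none else some ((p 0).pred h)) from rfl,
          dif_neg h]
        exact Fin.succ_pred _ h
    · rw [ThetaF_succ]
      have hS : (PsiF p).2.2 = Finset.univ.filter (fun i => p i.succ = 0) := rfl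
      by_cases h : p i.succ = 0
      · rw [if_pos (by rw [hS, Finset.mem_filter]; exact ⟨Finset.mem_univ _, h⟩)]
        exact h.symm
      · rw [if_neg (by rw [hS, Finset.mem_filter]; intro hc; exact h hc.2)]
        show (PhiF p i).succ = p i.succ
        simp only [PhiF, dif_neg h, Fin.succ_pred]
  have hround2 : ∀ a ∈ T, PsiF (ThetaF a) = a := by
    rintro ⟨q, t, S⟩ ha
    rw [hT, Finset.mem_sigma] at ha
    obtain ⟨hq, hfib⟩ := ha
    rw [fibF, Finset.mem_sigma] at hfib
    have hSsub : S ⊆ FixS q \ tbF q t := Finset.mem_powerset.mp hfib.2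
    have hSfix : ∀ i ∈ S, q i = i := fun i hi =>
      mem_FixS.mp (Finset.mem_sdiff.mp (hSsub hi)).1
    have e1 : PhiF (ThetaF ⟨q, t, S⟩) = q := by
      funext i
      by_cases hiS : i ∈ S
      · have h0 : ThetaF ⟨q, t, S⟩ i.succ = 0 := by
          rw [ThetaF_succ']
          exact if_pos hiS
        rw [PhiF_of_zero h0]
        exact (hSfix i hiS).symm
      · have h0 : ThetaF ⟨q, t, S⟩ i.succ = (q i).succ := by
          rw [ThetaF_succ']
          exact if_neg hiS
        have hne : ThetaF ⟨q, t, S⟩ i.succ ≠ 0 := by rw [h0]; exact Fin.succ_ne_zero _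
        simp only [PhiF, dif_neg hne]
        apply Fin.succ_injective
        rw [Fin.succ_pred, h0]
    have e2 : (if h : ThetaF ⟨q, t, S⟩ 0 = 0 then (none : Option (Fin m))
        else some ((ThetaF ⟨q, t, S⟩ 0).pred h)) = t := by
      rcases t with _ | u
      · exact dif_pos (ThetaF_zero_none q S)
      · have h0 : ThetaF ⟨q, some u, S⟩ 0 = u.succ := ThetaF_zero_some q u S
        have hne : ThetaF ⟨q, some u, S⟩ 0 ≠ 0 := by rw [h0]; exact Fin.succ_ne_zero u
        rw [dif_neg hne]
        have hpr : (ThetaF ⟨q, some u, S⟩ 0).pred hne = u := by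
          apply Fin.succ_injective
          rw [Fin.succ_pred, h0]
        rw [hpr]
    have e3 : (Finset.univ.filter (fun i => ThetaF ⟨q, t, S⟩ i.succ = 0)) = S := by
      ext i
      rw [Finset.mem_filter]
      constructor
      · rintro ⟨-, h⟩
        by_contra hiS
        rw [ThetaF_succ', if_neg hiS] at h
        exact Fin.succ_ne_zero _ h
      · intro hiS
        refine ⟨Finset.mem_univ _, ?_⟩
        rw [ThetaF_succ', if_pos hiS]
    show (⟨PhiF (ThetaF ⟨q, t, S⟩),
      (if h : ThetaF ⟨q, t, S⟩ 0 = 0 then none else some ((ThetaF ⟨q, t, S⟩ 0).pred h)),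
      Finset.univ.filter (fun i => ThetaF ⟨q, t, S⟩ i.succ = 0)⟩ :
        ((_ : Fin m → Fin m) × (_ : Option (Fin m)) × Finset (Fin m))) = ⟨q, t, S⟩
    rw [e1, e2, e3]
  -- weights
  have hweight : ∀ p ∈ Forests (m+1) H, x ^ fixc p = gF m x (PsiF p) := by
    intro p hp
    have hsd : (Finset.univ.filter (fun i : Fin m => p i.succ = i.succ))
        = FixS (PhiF p) \ (Finset.univ.filter (fun i => p i.succ = 0)) := by
      ext i
      rw [Finset.mem_filter, Finset.mem_sdiff, mem_FixS, Finset.mem_filter]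
      constructor
      · rintro ⟨-, h⟩
        have hne : p i.succ ≠ 0 := by rw [h]; exact Fin.succ_ne_zero i
        exact ⟨PhiF_of_fix h, fun hc => hne hc.2⟩
      · rintro ⟨h1, h2⟩
        have hne : p i.succ ≠ 0 := fun hc => h2 ⟨Finset.mem_univ _, hc⟩
        simp only [PhiF, dif_neg hne] at h1
        have h2' := congrArg Fin.succ h1
        rw [Fin.succ_pred] at h2'
        exact ⟨Finset.mem_univ _, h2'⟩
    have hsub : (Finset.univ.filter (fun i : Fin m => p i.succ = 0)) ⊆ FixS (PhiF p) :=
      fun i hi => mem_FixS.mpr (PhiF_of_zero (Finset.mem_filter.mp hi).2)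
    have hcard : (Finset.univ.filter (fun i : Fin m => p i.succ = i.succ)).card
        = (FixS (PhiF p)).card - (Finset.univ.filter (fun i : Fin m => p i.succ = 0)).card := by
      rw [hsd, Finset.card_sdiff_of_subset hsub]
    have hfc : fixc p = (if p 0 = 0 then 1 else 0)
        + (Finset.univ.filter (fun i : Fin m => p i.succ = i.succ)).card :=
      card_filter_zero (fun v => p v = v)
    have hite : (if (if h : p 0 = 0 then (none : Option (Fin m)) else some ((p 0).pred h)) = none
        then 1 else 0) = (if p 0 = 0 then 1 else 0) := by
      by_cases h00 : p 0 = 0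
      · rw [dif_pos h00, if_pos rfl, if_pos h00]
      · rw [dif_neg h00, if_neg (by simp), if_neg h00]
    simp only [gF, PsiF]
    rw [hfc, hcard, Nat.add_comm]
    congr 2
    by_cases h00 : p 0 = 0 <;> simp [h00]
  -- assemble
  have key : fwt (m+1) H x = ∑ a ∈ T, gF m x a := by
    rw [fwt]
    exact Finset.sum_nbij' PsiF ThetaF hΨmem hΘmem hround1 hround2 hweight
  rw [key, hT, Finset.sum_sigma, fwt, Finset.mul_sum, Finset.mul_sum]
  refine Finset.sum_congr rfl fun q hq => ?_
  have hqstab := (mem_Forests.mp hq).2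
  have hinner : ∑ b ∈ fibF q, gF m x ⟨q, b⟩
      = (x+1)^(FixS q).card * x + m * ((x+1)^((FixS q).card - 1) * x) := by
    rw [fibF, Finset.sum_sigma, Fintype.sum_option]
    congr 1
    · rw [show tbF q none = ∅ from rfl, Finset.sdiff_empty]
      calc ∑ S ∈ (FixS q).powerset, gF m x ⟨q, none, S⟩
          = ∑ S ∈ (FixS q).powerset, x ^ ((FixS q).card - S.card) * x := by
            refine Finset.sum_congr rfl fun S hS => ?_
            rw [gF]
            rw [if_pos rfl, pow_succ]
        _ = (x+1)^(FixS q).card * x := by rw [← Finset.sum_mul, sum_powerset_pow]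
    · calc ∑ u : Fin m, ∑ S ∈ (FixS q \ tbF q (some u)).powerset, gF m x ⟨q, some u, S⟩
          = ∑ _u : Fin m, ((x+1)^((FixS q).card - 1) * x) := by
            refine Finset.sum_congr rfl fun u _ => ?_
            have hρ : root q u ∈ FixS q := root_mem_FixS hqstab u
            have hr1 : 1 ≤ (FixS q).card := Finset.card_pos.mpr ⟨_, hρ⟩
            have htb : tbF q (some u) = {root q u} := rfl
            have hF' : (FixS q \ tbF q (some u)).card = (FixS q).card - 1 := by
              rw [htb, Finset.card_sdiff_of_subset (Finset.singleton_subset_iff.mpr hρ),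
                Finset.card_singleton]
            calc ∑ S ∈ (FixS q \ tbF q (some u)).powerset, gF m x ⟨q, some u, S⟩
                = ∑ S ∈ (FixS q \ tbF q (some u)).powerset,
                    x ^ ((FixS q \ tbF q (some u)).card - S.card) * x := by
                  refine Finset.sum_congr rfl fun S hS => ?_
                  have hSle : S.card ≤ (FixS q \ tbF q (some u)).card :=
                    Finset.card_le_card (Finset.mem_powerset.mp hS)
                  rw [gF]
                  rw [if_neg (by simp), ← pow_succ]
                  congr 1
                  show (FixS q).card - S.card + 0 = (FixS q \ tbF q (some u)).card - S.card + 1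
                  rw [hF'] at hSle ⊢
                  omega
              _ = (x+1)^((FixS q \ tbF q (some u)).card) * x := by
                  rw [← Finset.sum_mul, sum_powerset_pow]
              _ = (x+1)^((FixS q).card - 1) * x := by rw [hF']
          _ = m * ((x+1)^((FixS q).card - 1) * x) := by
            rw [Finset.sum_const, Finset.card_univ, Fintype.card_fin, smul_eq_mul]
  rw [hinner]
  have hfq : (x+1 : ℕ) ^ fixc q = (x+1) ^ (FixS q).card := rfl
  rw [hfq]
  rcases Nat.eq_zero_or_pos m with rfl | hm
  · simp only [Nat.zero_eq, Nat.cast_zero, zero_mul, Nat.mul_zero, add_zero]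
    ring
  · have hne : (FixS q).Nonempty := by
      refine ⟨root q ⟨0, hm⟩, root_mem_FixS hqstab _⟩
    have hr : 1 ≤ (FixS q).card := Finset.card_pos.mpr hne
    obtain ⟨r', hr'⟩ : ∃ r', (FixS q).card = r' + 1 := ⟨(FixS q).card - 1, by omega⟩
    rw [hr']
    rw [show r' + 1 - 1 = r' from rfl]
    ring
def Thresh {m : ℕ} (H : SimpleGraph (Fin m)) : Prop :=
  ∀ i j i' j' : Fin m, j < i → H.Adj i j → i' ≤ i → j' ≤ j → i' ≠ j' → H.Adj i' j'

lemma thresh_restSucc {m : ℕ} {H : SimpleGraph (Fin (m+1))} (h : Thresh H) :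
    Thresh (restSucc m H) := by
  intro i j i' j' hji hadj hi hj hne
  exact h i.succ j.succ i'.succ j'.succ (by simpa using hji) hadj (by simpa using hi)
    (by simpa using hj) (fun hc => hne (Fin.succ_injective _ hc))

lemma thresh_restCast {m : ℕ} {H : SimpleGraph (Fin (m+1))} (h : Thresh H) :
    Thresh (restCast m H) := by
  intro i j i' j' hji hadj hi hj hne
  exact h i.castSucc j.castSucc i'.castSucc j'.castSucc (by simpa using hji) hadj
    (by simpa using hi) (by simpa using hj) (fun hc => hne (Fin.castSucc_injective _ hc))

/-- downward closedness of neighborhoods in a threshold graph -/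
lemma thresh_dc {m : ℕ} {H : SimpleGraph (Fin m)} (hth : Thresh H) {v z y : Fin m}
    (hadj : H.Adj v z) (hyz : y ≤ z) (hyv : y ≠ v) : H.Adj v y := by
  rcases lt_trichotomy v z with hvz | hvz | hvz
  · rcases lt_trichotomy y v with hyv' | hyv' | hyv'
    · exact hth z v v y hvz hadj.symm (le_of_lt hvz) (le_of_lt hyv') (Ne.symm hyv)
    · exact absurd hyv' hyv
    · exact (hth z v y v hvz hadj.symm hyz le_rfl hyv).symm
  · exfalso
    rw [hvz] at hadj
    exact H.irrefl hadj
  · exact hth v z v y hvz hadj le_rfl hyz (Ne.symm hyv)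

open Classical in
noncomputable def degF {m : ℕ} (H : SimpleGraph (Fin m)) (v : Fin m) : ℕ :=
  (Finset.univ.filter fun j => H.Adj v j).card

open Classical in
lemma mem_degF_filter {m : ℕ} {H : SimpleGraph (Fin m)} {v j : Fin m} :
    (j ∈ Finset.univ.filter fun j => H.Adj v j) ↔ H.Adj v j := by
  rw [Finset.mem_filter]
  simp

/-- adjacency characterisation in threshold graphs -/
lemma adj_iff_le_degF {m : ℕ} {H : SimpleGraph (Fin m)} (hth : Thresh H) {w u : Fin m}
    (hwu : w < u) : H.Adj u w ↔ (u : ℕ) ≤ degF H w := by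
  classical
  constructor
  · intro hadj
    have hsub : (Finset.Iic u).erase w ⊆ Finset.univ.filter fun j => H.Adj w j := by
      intro y hy
      rw [Finset.mem_erase, Finset.mem_Iic] at hy
      exact mem_degF_filter.mpr (thresh_dc hth hadj.symm hy.2 hy.1)
    have hcard : ((Finset.Iic u).erase w).card = (u : ℕ) := by
      rw [Finset.card_erase_of_mem (Finset.mem_Iic.mpr (le_of_lt hwu)), Fin.card_Iic]
      simp
    calc (u : ℕ) = ((Finset.Iic u).erase w).card := hcard.symm
    _ ≤ _ := Finset.card_le_card hsub
    _ = degF H w := by rw [degF]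
  · intro hle
    by_contra hadj
    have hsub : (Finset.univ.filter fun j => H.Adj w j) ⊆ (Finset.Iio u).erase w := by
      intro z hz
      have hz' : H.Adj w z := mem_degF_filter.mp hz
      rw [Finset.mem_erase, Finset.mem_Iio]
      refine ⟨hz'.ne', ?_⟩
      rcases lt_trichotomy z u with h | h | h
      · exact h
      · exact absurd (h ▸ hz'.symm) hadj
      · exact absurd ((thresh_dc hth hz' (le_of_lt h) (ne_of_gt hwu)).symm) hadj
    have hub : degF H w ≤ (u : ℕ) - 1 := by
      calc degF H w ≤ ((Finset.Iio u).erase w).card := Finset.card_le_card hsub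
      _ ≤ (Finset.Iio u).card - 1 := by
          rw [Finset.card_erase_of_mem (Finset.mem_Iio.mpr hwu)]
      _ = (u : ℕ) - 1 := by rw [Fin.card_Iio]
    have hu1 : (w : ℕ) < (u : ℕ) := hwu
    omega

/-- degrees are sorted (reverse order) in a threshold graph -/
lemma degF_antitone {m : ℕ} {H : SimpleGraph (Fin m)} (hth : Thresh H) {u v : Fin m}
    (huv : u ≤ v) : degF H v ≤ degF H u := by
  classical
  rcases eq_or_lt_of_le huv with rfl | huv
  · exact le_rfl
  have hsub : ∀ z, H.Adj v z → z ≠ u → H.Adj u z := by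
    intro z hz hzu
    rcases lt_trichotomy z u with h | h | h
    · exact hth v z u z (h.trans huv) hz (le_of_lt huv) le_rfl (ne_of_gt h)
    · exact absurd h hzu
    · rcases lt_trichotomy z v with h2 | h2 | h2
      · exact (hth v z z u h2 hz (le_of_lt h2) (le_of_lt h) (ne_of_gt h)).symm
      · exfalso
        rw [h2] at hz
        exact H.irrefl hz
      · exact (hth z v z u h2 hz.symm le_rfl (le_of_lt huv) (ne_of_gt h)).symm
  by_cases huN : H.Adj v u
  · have h1 : ((Finset.univ.filter fun j => H.Adj v j).erase u)
        ⊆ ((Finset.univ.filter fun j => H.Adj u j).erase v) := by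
      intro z hz
      rw [Finset.mem_erase, mem_degF_filter] at hz
      rw [Finset.mem_erase, mem_degF_filter]
      exact ⟨hz.2.ne', hsub z hz.2 hz.1⟩
    have h2 : u ∈ (Finset.univ.filter fun j => H.Adj v j) := mem_degF_filter.mpr huN
    have h3 : v ∈ (Finset.univ.filter fun j => H.Adj u j) := mem_degF_filter.mpr huN.symm
    have := Finset.card_le_card h1
    rw [Finset.card_erase_of_mem h2, Finset.card_erase_of_mem h3] at this
    have h4 : 1 ≤ degF H v := Finset.card_pos.mpr ⟨u, h2⟩
    have h5 : 1 ≤ degF H u := Finset.card_pos.mpr ⟨v, h3⟩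
    have hdv : degF H v = (Finset.univ.filter fun j => H.Adj v j).card := rfl
    have hdu : degF H u = (Finset.univ.filter fun j => H.Adj u j).card := rfl
    omega
  · have h1 : (Finset.univ.filter fun j => H.Adj v j)
        ⊆ (Finset.univ.filter fun j => H.Adj u j) := by
      intro z hz
      rw [mem_degF_filter] at hz ⊢
      refine hsub z hz (fun hc => huN ?_)
      rw [hc] at hz
      exact hz
    exact Finset.card_le_card h1
lemma degF_zero_dom {m : ℕ} {H : SimpleGraph (Fin (m+1))}
    (hdom : ∀ v : Fin (m+1), v ≠ 0 → H.Adj v 0) : degF H 0 = m := by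
  classical
  have h : (Finset.univ.filter fun j => H.Adj 0 j) = Finset.univ.erase 0 := by
    ext j
    rw [mem_degF_filter, Finset.mem_erase]
    constructor
    · intro hadj
      exact ⟨hadj.ne', Finset.mem_univ _⟩
    · rintro ⟨hne, -⟩
      exact (hdom j hne).symm
  rw [degF, h, Finset.card_erase_of_mem (Finset.mem_univ _), Finset.card_univ,
    Fintype.card_fin]
  omega

lemma degF_le {m : ℕ} (H : SimpleGraph (Fin (m+1))) (v : Fin (m+1)) : degF H v ≤ m := by
  classical
  have h : (Finset.univ.filter fun j => H.Adj v j) ⊆ Finset.univ.erase v := by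
    intro j hj
    rw [mem_degF_filter] at hj
    rw [Finset.mem_erase]
    exact ⟨hj.ne', Finset.mem_univ _⟩
  have := Finset.card_le_card h
  rwa [Finset.card_erase_of_mem (Finset.mem_univ _), Finset.card_univ, Fintype.card_fin] at this

lemma degF_pos_dom {m : ℕ} {H : SimpleGraph (Fin (m+1))}
    (hdom : ∀ v : Fin (m+1), v ≠ 0 → H.Adj v 0) {v : Fin (m+1)} (hv : v ≠ 0) :
    1 ≤ degF H v := by
  classical
  exact Finset.card_pos.mpr ⟨0, mem_degF_filter.mpr (hdom v hv)⟩

/-- existence and uniqueness of the crossing vertex -/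
lemma crossing_existsUnique {m : ℕ} {H : SimpleGraph (Fin (m+1))} (hth : Thresh H)
    (hdom : ∀ v : Fin (m+1), v ≠ 0 → H.Adj v 0) (hm : 1 ≤ m) :
    ∃! v : Fin (m+1), v ≠ 0 ∧ degF H v = (v : ℕ) := by
  classical
  set A : Finset (Fin (m+1)) :=
    Finset.univ.filter (fun v => 1 ≤ (v : ℕ) ∧ (v : ℕ) ≤ degF H v) with hA
  have hone : (⟨1, by omega⟩ : Fin (m+1)) ∈ A := by
    rw [hA, Finset.mem_filter]
    refine ⟨Finset.mem_univ _, by norm_num, ?_⟩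
    have := degF_pos_dom hdom (v := ⟨1, by omega⟩) (by
      intro hc
      have := congrArg Fin.val hc
      simp at this)
    have hval : ((⟨1, by omega⟩ : Fin (m+1)) : ℕ) = 1 := rfl
    omega
  have hAne : A.Nonempty := ⟨_, hone⟩
  set v := A.max' hAne with hv
  have hvA : v ∈ A := A.max'_mem hAne
  rw [hA, Finset.mem_filter] at hvA
  obtain ⟨-, hv1, hvle⟩ := hvA
  have hvne : v ≠ 0 := by
    intro hc
    rw [hc] at hv1
    simp at hv1
  have hveq : degF H v = (v : ℕ) := by
    by_contra hne
    have hlt : (v : ℕ) < degF H v := lt_of_le_of_ne hvle (fun h => hne h.symm)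
    have hvm : (v : ℕ) < m := by
      have := degF_le H v
      omega
    set w : Fin (m+1) := ⟨(v : ℕ) + 1, by omega⟩ with hw
    have hwval : (w : ℕ) = (v : ℕ) + 1 := rfl
    have hwdeg : (w : ℕ) ≤ degF H w := by
      have hsub : Finset.Iio w ⊆ Finset.univ.filter fun j => H.Adj w j := by
        intro y hy
        rw [Finset.mem_Iio] at hy
        rw [mem_degF_filter]
        have hyv : y ≤ v := by
          have : (y : ℕ) < (w : ℕ) := hy
          rw [hwval] at this
          exact Fin.le_def.mpr (by omega)
        have hdy : degF H v ≤ degF H y := degF_antitone hth hyv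
        refine (adj_iff_le_degF hth hy).mpr ?_
        rw [hwval]
        omega
      have := Finset.card_le_card hsub
      rw [Fin.card_Iio] at this
      have hdw : degF H w = (Finset.univ.filter fun j => H.Adj w j).card := rfl
      omega
    have hwA : w ∈ A := by
      rw [hA, Finset.mem_filter]
      exact ⟨Finset.mem_univ _, by rw [hwval]; omega, hwdeg⟩
    have := A.le_max' w hwA
    rw [← hv] at this
    have : (w : ℕ) ≤ (v : ℕ) := this
    omega
  refine ⟨v, ⟨hvne, hveq⟩, ?_⟩
  rintro y ⟨hyne, hyeq⟩
  by_contra hyv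
  rcases lt_or_gt_of_ne (fun h => hyv h) with h | h
  · have := degF_antitone hth (le_of_lt h)
    rw [hyeq, hveq] at this
    have h2 : (y : ℕ) < (v : ℕ) := h
    omega
  · have := degF_antitone hth (le_of_lt h)
    rw [hyeq, hveq] at this
    have h2 : (v : ℕ) < (y : ℕ) := h
    omega

lemma degF_restSucc {m : ℕ} {H : SimpleGraph (Fin (m+1))}
    (hdom : ∀ v : Fin (m+1), v ≠ 0 → H.Adj v 0) (i : Fin m) :
    degF (restSucc m H) i = degF H i.succ - 1 := by
  classical
  have hmap : (Finset.univ.filter fun j => (restSucc m H).Adj i j).map (Fin.succEmb m)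
      = (Finset.univ.filter fun j => H.Adj i.succ j).erase 0 := by
    ext z
    rw [Finset.mem_map, Finset.mem_erase, mem_degF_filter]
    constructor
    · rintro ⟨j, hj, rfl⟩
      rw [mem_degF_filter] at hj
      exact ⟨Fin.succ_ne_zero j, hj⟩
    · rintro ⟨hz0, hadj⟩
      refine ⟨z.pred hz0, ?_, Fin.succ_pred z hz0⟩
      rw [mem_degF_filter]
      show H.Adj i.succ ((z.pred hz0).succ)
      rw [Fin.succ_pred]
      exact hadj
  have h0mem : (0 : Fin (m+1)) ∈ Finset.univ.filter fun j => H.Adj i.succ j :=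
    mem_degF_filter.mpr (hdom i.succ (Fin.succ_ne_zero i))
  have := congrArg Finset.card hmap
  rw [Finset.card_map, Finset.card_erase_of_mem h0mem] at this
  exact this

lemma degF_restCast {m : ℕ} {H : SimpleGraph (Fin (m+1))}
    (hiso : ∀ j, ¬ H.Adj (Fin.last m) j) (i : Fin m) :
    degF (restCast m H) i = degF H i.castSucc := by
  classical
  have hmap : (Finset.univ.filter fun j => (restCast m H).Adj i j).map Fin.castSuccEmb
      = Finset.univ.filter fun j => H.Adj i.castSucc j := by
    ext z
    rw [Finset.mem_map, mem_degF_filter]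
    constructor
    · rintro ⟨j, hj, rfl⟩
      rw [mem_degF_filter] at hj
      exact hj
    · intro hadj
      have hzlast : z ≠ Fin.last m := by
        intro hc
        rw [hc] at hadj
        exact hiso _ hadj.symm
      refine ⟨z.castPred hzlast, ?_, Fin.castSucc_castPred z hzlast⟩
      rw [mem_degF_filter]
      show H.Adj i.castSucc ((z.castPred hzlast).castSucc)
      rw [Fin.castSucc_castPred]
      exact hadj
  have := congrArg Finset.card hmap
  rw [Finset.card_map] at this
  exact this

noncomputable def cF {m : ℕ} (H : SimpleGraph (Fin m)) (v : Fin m) : ℕ :=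
  if (v : ℕ) < degF H v then degF H v + 1 else if degF H v < (v : ℕ) then degF H v else 0
theorem fwt_formula : ∀ (m : ℕ) (H : SimpleGraph (Fin m)), Thresh H →
    ∀ x : ℕ, fwt m H x = ∏ v, (x + cF H v) := by
  intro m
  induction m with
  | zero =>
    intro H _ x
    have h1 : Forests 0 H = Finset.univ := by
      apply Finset.eq_univ_of_forall
      intro p
      exact mem_Forests.mpr ⟨fun i => i.elim0, fun i => i.elim0⟩
    have h2 : ∀ p : Fin 0 → Fin 0, fixc p = 0 := by
      intro p
      rw [fixc]
      simp
    rw [fwt, h1]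
    rw [Finset.sum_congr rfl (fun p _ => by rw [h2 p, pow_zero])]
    rw [Finset.sum_const, smul_eq_mul, mul_one, Finset.card_univ]
    simp
  | succ m ih =>
    intro H hth x
    by_cases hlast : ∃ j, H.Adj (Fin.last m) j
    · -- vertex 0 is dominating; use the cone identity
      obtain ⟨j, hj⟩ := hlast
      have hjne : j ≠ Fin.last m := fun hc => H.irrefl (by rw [← hc] at hj; exact hj)
      have hjlt : j < Fin.last m := lt_of_le_of_ne (Fin.le_last j) hjne
      have hdom : ∀ v : Fin (m+1), v ≠ 0 → H.Adj v 0 := by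
        intro v hv
        exact hth (Fin.last m) j v 0 hjlt hj (Fin.le_last v) (Fin.zero_le j) hv
      have hm : 1 ≤ m := by
        by_contra h
        have hm0 : m = 0 := by omega
        subst hm0
        exact hjne (Fin.val_injective (by have := j.isLt; omega))
      have hcone := fwt_cone m H hdom x
      have hih := ih (restSucc m H) (thresh_restSucc hth) (x+1)
      obtain ⟨vstar, ⟨hvne, hveq⟩, hvuniq⟩ := crossing_existsUnique hth hdom hm
      set jstar : Fin m := vstar.pred hvne with hjstar
      have hjs : jstar.succ = vstar := Fin.succ_pred _ _
      have hd1 : ∀ i : Fin m, 1 ≤ degF H i.succ :=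
        fun i => degF_pos_dom hdom (Fin.succ_ne_zero i)
      have hmatch : ∀ i : Fin m, i ≠ jstar →
          x + 1 + cF (restSucc m H) i = x + cF H i.succ := by
        intro i hi
        have hdne : degF H i.succ ≠ (i.succ : ℕ) := by
          intro hc
          have hiv : i.succ = vstar := hvuniq i.succ ⟨Fin.succ_ne_zero i, hc⟩
          apply hi
          refine Fin.succ_injective _ ?_
          rw [hjs, hiv]
        have hval : (i.succ : ℕ) = (i : ℕ) + 1 := Fin.val_succ i
        rw [cF, cF, degF_restSucc hdom i]
        have h1 := hd1 i
        split_ifs <;> omega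
      have hjmatch1 : cF (restSucc m H) jstar = 0 := by
        have hval : (jstar.succ : ℕ) = (jstar : ℕ) + 1 := Fin.val_succ jstar
        rw [hjs] at hval
        rw [cF, degF_restSucc hdom jstar, hjs, hveq]
        split_ifs <;> omega
      have hjmatch2 : cF H vstar = 0 := by
        rw [cF, hveq]
        split_ifs <;> omega
      have hc0 : cF H 0 = m + 1 := by
        rw [cF, degF_zero_dom hdom]
        have h0 : ((0 : Fin (m+1)) : ℕ) = 0 := rfl
        split_ifs <;> omega
      have hP : ∏ i ∈ Finset.univ.erase jstar, (x + 1 + cF (restSucc m H) i)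
          = ∏ i ∈ Finset.univ.erase jstar, (x + cF H i.succ) :=
        Finset.prod_congr rfl (fun i hi => hmatch i (Finset.ne_of_mem_erase hi))
      have hprodf : ∏ i : Fin m, (x + cF H i.succ)
          = x * ∏ i ∈ Finset.univ.erase jstar, (x + cF H i.succ) := by
        rw [← Finset.mul_prod_erase Finset.univ (fun i => x + cF H i.succ)
          (Finset.mem_univ jstar)]
        have hfj : x + cF H jstar.succ = x := by rw [hjs, hjmatch2]; omega
        rw [hfj]
      have hprodg : ∏ i : Fin m, (x + 1 + cF (restSucc m H) i)
          = (x + 1) * ∏ i ∈ Finset.univ.erase jstar, (x + cF H i.succ) := by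
        rw [← Finset.mul_prod_erase Finset.univ (fun i => x + 1 + cF (restSucc m H) i)
          (Finset.mem_univ jstar), hP, hjmatch1]
      apply Nat.eq_of_mul_eq_mul_left (show 0 < x + 1 by omega)
      rw [hcone, hih, hprodg, Fin.prod_univ_succ, hc0, hprodf]
      ring
    · push_neg at hlast
      rw [fwt_isolated m H hlast x, ih (restCast m H) (thresh_restCast hth) x,
        Fin.prod_univ_castSucc]
      have hlast0 : degF H (Fin.last m) = 0 := by
        classical
        rw [degF, Finset.filter_eq_empty_iff.mpr (fun j _ => hlast j), Finset.card_empty]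
      have hclast : cF H (Fin.last m) = 0 := by
        rw [cF, hlast0]
        split_ifs <;> omega
      have hmatch2 : ∀ i : Fin m, x + cF (restCast m H) i = x + cF H i.castSucc := by
        intro i
        rw [cF, cF, degF_restCast hlast i, Fin.coe_castSucc]
      rw [Finset.prod_congr rfl (fun i _ => hmatch2 i), hclast]
      ring
def TreeOf {m : ℕ} (q : Fin m → Fin m) : Fin (m+1) → Fin (m+1) :=
  fun v => Fin.cases 0 (fun i => if q i = i then 0 else (q i).succ) v

lemma TreeOf_zero {m : ℕ} (q : Fin m → Fin m) : TreeOf q 0 = 0 := rfl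

lemma TreeOf_succ {m : ℕ} (q : Fin m → Fin m) (i : Fin m) :
    TreeOf q i.succ = if q i = i then 0 else (q i).succ := by
  simp only [TreeOf, Fin.cases_succ]

lemma stab_PhiF_of_reach_zero {m : ℕ} {p : Fin (m+1) → Fin (m+1)} :
    ∀ (k : ℕ) (i : Fin m), p^[k] i.succ = 0 → Stab (PhiF p) i := by
  intro k
  induction k using Nat.strong_induction_on with
  | _ k ihk =>
    intro i hk
    by_cases h0 : p i.succ = 0
    · refine ⟨0, ?_⟩
      simp only [Function.iterate_one, Function.iterate_zero, id_eq, zero_add]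
      exact PhiF_of_zero h0
    · rcases Nat.eq_zero_or_pos k with rfl | hkpos
      · simp only [Function.iterate_zero, id_eq] at hk
        exact absurd hk (Fin.succ_ne_zero i)
      · have hz : p i.succ = ((p i.succ).pred h0).succ := (Fin.succ_pred _ _).symm
        have hk2 : p^[k] i.succ = p^[k-1] (p i.succ) := by
          conv_lhs => rw [show k = k - 1 + 1 by omega]
          rw [Function.iterate_succ_apply]
        have hk' : p^[k-1] ((p i.succ).pred h0).succ = 0 := by
          rw [← hz, ← hk2]
          exact hk
        have hstab := ihk (k-1) (by omega) _ hk'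
        have hqi : PhiF p i = (p i.succ).pred h0 := dif_neg h0
        have : Stab (PhiF p) (PhiF p i) := by rw [hqi]; exact hstab
        exact stab_of_stab_apply this

lemma treeOf_reach_zero {m : ℕ} {q : Fin m → Fin m} :
    ∀ (k : ℕ) (i : Fin m), q^[k+1] i = q^[k] i → ∃ k', (TreeOf q)^[k'] i.succ = 0 := by
  intro k
  induction k using Nat.strong_induction_on with
  | _ k ihk =>
    intro i hk
    by_cases hqi : q i = i
    · refine ⟨1, ?_⟩
      simp only [Function.iterate_one]
      rw [TreeOf_succ, if_pos hqi]
    · rcases Nat.eq_zero_or_pos k with rfl | hkpos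
      · simp only [zero_add, Function.iterate_one, Function.iterate_zero, id_eq] at hk
        exact absurd hk hqi
      · have hk' : q^[(k-1)+1] (q i) = q^[k-1] (q i) := by
          have e1 : q^[k+1] i = q^[k] (q i) := Function.iterate_succ_apply q k i
          have e2 : q^[k] i = q^[k-1] (q i) := by
            conv_lhs => rw [show k = k - 1 + 1 by omega]
            rw [Function.iterate_succ_apply]
          rw [e1, e2] at hk
          rw [Nat.sub_add_cancel hkpos]
          exact hk
        rcases ihk (k-1) (by omega) (q i) hk' with ⟨k', hk'⟩
        refine ⟨k' + 1, ?_⟩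
        rw [Function.iterate_succ_apply, TreeOf_succ, if_neg hqi]
        exact hk'

lemma PhiF_mem_forests_of_spanTree {n : ℕ} {G : SimpleGraph (Fin (n+1))}
    {p : Fin (n+1) → Fin (n+1)} (hp : IsSpanTree n G p) :
    PhiF p ∈ Forests n (restSucc n G) := by
  obtain ⟨h0, hadj, hreach⟩ := hp
  refine mem_Forests.mpr ⟨fun i => ?_, fun i => ?_⟩
  · by_cases hz : p i.succ = 0
    · left; exact PhiF_of_zero hz
    · right
      show G.Adj i.succ ((PhiF p i).succ)
      have : (PhiF p i).succ = p i.succ := by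
        rw [show PhiF p i = (p i.succ).pred hz from dif_neg hz, Fin.succ_pred]
      rw [this]
      exact hadj i.succ (Fin.succ_ne_zero i)
  · rcases hreach i.succ with ⟨k, hk⟩
    exact stab_PhiF_of_reach_zero k i hk

lemma treeOf_spanTree {n : ℕ} {G : SimpleGraph (Fin (n+1))}
    (hdom : ∀ v : Fin (n+1), v ≠ 0 → G.Adj v 0)
    {q : Fin n → Fin n} (hq : q ∈ Forests n (restSucc n G)) :
    IsSpanTree n G (TreeOf q) := by
  rcases mem_Forests.mp hq with ⟨hloc, hstab⟩
  refine ⟨TreeOf_zero q, fun v hv => ?_, fun v => ?_⟩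
  · obtain ⟨i, rfl⟩ : ∃ i : Fin n, i.succ = v := Fin.exists_succ_eq.mpr hv
    rw [TreeOf_succ]
    by_cases hqi : q i = i
    · rw [if_pos hqi]
      exact hdom i.succ (Fin.succ_ne_zero i)
    · rw [if_neg hqi]
      rcases hloc i with h | h
      · exact absurd h hqi
      · exact h
  · refine Fin.cases ⟨0, rfl⟩ (fun i => ?_) v
    rcases hstab i with ⟨k, hk⟩
    exact treeOf_reach_zero k i hk

lemma treeOf_PhiF {n : ℕ} {G : SimpleGraph (Fin (n+1))}
    {p : Fin (n+1) → Fin (n+1)} (hp : IsSpanTree n G p) : TreeOf (PhiF p) = p := by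
  obtain ⟨h0, hadj, -⟩ := hp
  funext v
  refine Fin.cases ?_ (fun i => ?_) v
  · rw [TreeOf_zero, h0]
  · rw [TreeOf_succ]
    by_cases hz : p i.succ = 0
    · rw [if_pos (PhiF_of_zero hz), hz]
    · have hsucc : (PhiF p i).succ = p i.succ := by
        rw [show PhiF p i = (p i.succ).pred hz from dif_neg hz, Fin.succ_pred]
      have hne : PhiF p i ≠ i := by
        intro hc
        have : p i.succ = i.succ := by rw [← hsucc, hc]
        have h2 := hadj i.succ (Fin.succ_ne_zero i)
        rw [this] at h2
        exact G.irrefl h2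
      rw [if_neg hne, hsucc]

lemma PhiF_treeOf {n : ℕ} (q : Fin n → Fin n) : PhiF (TreeOf q) = q := by
  funext i
  by_cases hqi : q i = i
  · have hz : TreeOf q i.succ = 0 := by rw [TreeOf_succ, if_pos hqi]
    rw [PhiF_of_zero hz, hqi]
  · have hz : TreeOf q i.succ = (q i).succ := by rw [TreeOf_succ, if_neg hqi]
    have hne : TreeOf q i.succ ≠ 0 := by rw [hz]; exact Fin.succ_ne_zero _
    rw [show PhiF (TreeOf q) i = ((TreeOf q) i.succ).pred hne from dif_neg hne]
    apply Fin.succ_injective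
    rw [Fin.succ_pred, hz]

lemma spanTree_card (n : ℕ) (G : SimpleGraph (Fin (n+1)))
    (hdom : ∀ v : Fin (n+1), v ≠ 0 → G.Adj v 0) :
    Nat.card {p : Fin (n+1) → Fin (n+1) // IsSpanTree n G p}
      = fwt n (restSucc n G) 1 := by
  have hfwt1 : fwt n (restSucc n G) 1 = (Forests n (restSucc n G)).card := by
    rw [fwt, Finset.sum_congr rfl (fun p _ => one_pow (fixc p)), Finset.sum_const,
      smul_eq_mul, mul_one]
  let e : {p : Fin (n+1) → Fin (n+1) // IsSpanTree n G p}
      ≃ {q // q ∈ Forests n (restSucc n G)} :=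
    { toFun := fun pp => ⟨PhiF pp.1, PhiF_mem_forests_of_spanTree pp.2⟩
      invFun := fun qq => ⟨TreeOf qq.1, treeOf_spanTree hdom qq.2⟩
      left_inv := fun pp => Subtype.ext (treeOf_PhiF pp.2)
      right_inv := fun qq => Subtype.ext (PhiF_treeOf qq.1) }
  rw [Nat.card_congr e, Nat.card_eq_fintype_card, Fintype.card_coe, hfwt1]

theorem card_spanning_trees (n : ℕ) (hn : 1 ≤ n) (G : SimpleGraph (Fin (n+1)))
    (hG : IsThreshold n G) (hc : G.Connected) :
    Nat.card {p : Fin (n+1) → Fin (n+1) // IsSpanTree n G p} =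
      (∏ᶠ i ∈ {i : Fin (n+1) | 0 < (i : ℕ) ∧ (i : ℕ) < deg n G i}, (deg n G i + 1)) *
        ∏ᶠ i ∈ {i : Fin (n+1) | deg n G i < (i : ℕ)}, deg n G i := by
  classical
  have hth : Thresh G := hG
  have hdom : ∀ v : Fin (n+1), v ≠ 0 → G.Adj v 0 := by
    intro v hv
    obtain ⟨w, hw⟩ : ∃ w, G.Adj v w := by
      obtain ⟨walk⟩ := hc.preconnected v 0
      cases walk with
      | nil => exact absurd rfl hv
      | cons h _ => exact ⟨_, h⟩
    rcases lt_trichotomy w v with h | h | h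
    · exact hth v w v 0 h hw le_rfl (Fin.zero_le w) hv
    · exfalso
      rw [h] at hw
      exact G.irrefl hw
    · exact hth w v v 0 h hw.symm (le_of_lt h) (Fin.zero_le v) hv
  have hdeg : ∀ v, deg n G v = degF G v := by
    intro v
    rw [deg, Set.ncard_eq_toFinset_card', Set.toFinset_setOf, degF]
  set F : Fin (n+1) → ℕ := fun v =>
    if 0 < (v : ℕ) ∧ (v : ℕ) < deg n G v then deg n G v + 1
    else if deg n G v < (v : ℕ) then deg n G v else 1 with hF
  have hF0 : F 0 = 1 := by
    simp [hF]
  have hmatch : ∀ i : Fin n, 1 + cF (restSucc n G) i = F i.succ := by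
    intro i
    have hd' := degF_restSucc hdom i
    have hd1 : 1 ≤ degF G i.succ := degF_pos_dom hdom (Fin.succ_ne_zero i)
    have hval : (i.succ : ℕ) = (i : ℕ) + 1 := Fin.val_succ i
    simp only [hF]
    rw [cF, hd', hdeg i.succ]
    split_ifs <;> omega
  rw [spanTree_card n G hdom, fwt_formula n (restSucc n G) (thresh_restSucc hth) 1]
  rw [Finset.prod_congr rfl (fun i _ => hmatch i)]
  have hsucc : ∏ i : Fin n, F i.succ = ∏ v : Fin (n+1), F v := by
    rw [Fin.prod_univ_succ, hF0, one_mul]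
  rw [hsucc]
  have hsplit : ∀ v : Fin (n+1), F v =
      (if 0 < (v : ℕ) ∧ (v : ℕ) < deg n G v then deg n G v + 1 else 1) *
      (if deg n G v < (v : ℕ) then deg n G v else 1) := by
    intro v
    simp only [hF]
    by_cases h1 : 0 < (v : ℕ) ∧ (v : ℕ) < deg n G v
    · rw [if_pos h1, if_pos h1, if_neg (show ¬ deg n G v < (v : ℕ) by omega)]
      try omega
    · rw [if_neg h1, if_neg h1]
      by_cases h2 : deg n G v < (v : ℕ)
      · rw [if_pos h2]
        try omega
      · rw [if_neg h2]
        try omega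
  rw [Finset.prod_congr rfl (fun v _ => hsplit v), Finset.prod_mul_distrib]
  have hset1 : {i : Fin (n+1) | 0 < (i : ℕ) ∧ (i : ℕ) < deg n G i}
      = ↑(Finset.univ.filter fun i : Fin (n+1) => 0 < (i : ℕ) ∧ (i : ℕ) < deg n G i) := by
    ext i
    simp
  have hset2 : {i : Fin (n+1) | deg n G i < (i : ℕ)}
      = ↑(Finset.univ.filter fun i : Fin (n+1) => deg n G i < (i : ℕ)) := by
    ext i
    simp
  rw [hset1, hset2, finprod_mem_coe_finset, finprod_mem_coe_finset]
  congr 1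
  · rw [Finset.prod_filter]
  · rw [Finset.prod_filter]

end ThresholdFlow
end

section
/- Let a, d, and z be positive integers. Then, as an identity in the field of rational functions ℚ(q), [a]_{q^{d+1}} [d]_q [z+a]_q = q^a [a]_{q^d} [d−1]_q [z]_q + q^{a−1} wt_{q,q^{−1}}(a) [z+da]_q − q^a (1−q)(1−q^{−1}) Σ_{k=1}^{a−1} wt_{q,q^{−1}}(k) [a−k]_{q^d} [d−1]_q [z+dk]_q. -/
set_option maxHeartbeats 1000000


open Finset Polynomial

namespace ThresholdFlow

/-- `q` as an element of the field of rational functions `ℚ(q)`. -/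
noncomputable def rq : RatFunc ℚ := RatFunc.X

/-- `[b]_q` in `ℚ(q)`. -/
noncomputable def rnum (b : ℕ) : RatFunc ℚ := ∑ k ∈ Finset.range b, rq ^ k

/-- `[b]_{q^m}` in `ℚ(q)`. -/
noncomputable def rnumpow (m b : ℕ) : RatFunc ℚ := ∑ k ∈ Finset.range b, rq ^ (m * k)

/-- `wt_{q,q⁻¹}(b) = (q^b - q^{-b})/(q - q⁻¹)` in `ℚ(q)`. -/
noncomputable def rwt (b : ℕ) : RatFunc ℚ := (rq ^ b - rq⁻¹ ^ b) / (rq - rq⁻¹)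

lemma rq_ne : rq ≠ 0 := RatFunc.X_ne_zero

lemma pow_sub_one_ne (m : ℕ) (hm : m ≠ 0) : rq ^ m - 1 ≠ 0 := by
  have h : rq ^ m - 1 = algebraMap (Polynomial ℚ) _ (Polynomial.X ^ m - 1) := by
    simp [rq, map_sub, map_pow, RatFunc.algebraMap_X]
  rw [h]
  apply (map_ne_zero_iff _ (RatFunc.algebraMap_injective ℚ)).mpr
  intro hc
  have := congrArg (fun p => Polynomial.coeff p m) hc
  simp [Polynomial.coeff_one] at this
  rw [if_neg hm] at this
  norm_num at this

lemma rq_sub_one_ne : rq - 1 ≠ 0 := by simpa using pow_sub_one_ne 1 one_ne_zero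

lemma one_sub_rq_ne : 1 - rq ≠ 0 := fun h => rq_sub_one_ne (by linear_combination -h)

lemma sq_sub_one_ne : rq ^ 2 - 1 ≠ 0 := pow_sub_one_ne 2 two_ne_zero

lemma sub_inv_ne : rq - rq⁻¹ ≠ 0 := by
  intro h
  apply sq_sub_one_ne
  have : (rq - rq⁻¹) * rq = rq ^ 2 - 1 := by
    rw [sub_mul, inv_mul_cancel₀ rq_ne]; ring
  rw [h, zero_mul] at this
  exact this.symm

lemma one_sub_inv : (1 : RatFunc ℚ) - rq⁻¹ = (rq - 1) / rq := by
  rw [eq_div_iff rq_ne, sub_mul, one_mul, inv_mul_cancel₀ rq_ne]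

lemma rwt_div (k : ℕ) : rwt k = rq * (rq ^ (2 * k) - 1) / (rq ^ k * (rq ^ 2 - 1)) := by
  rw [rwt, div_eq_div_iff sub_inv_ne (mul_ne_zero (pow_ne_zero _ rq_ne) sq_sub_one_ne)]
  have hk : rq⁻¹ ^ k * rq ^ k = 1 := by rw [← mul_pow, inv_mul_cancel₀ rq_ne, one_pow]
  have h2 : rq * rq⁻¹ = 1 := mul_inv_cancel₀ rq_ne
  have h3 : rq ^ (2 * k) = rq ^ k * rq ^ k := by rw [two_mul, pow_add]
  linear_combination (-(rq ^ 2 - 1)) * hk + (rq ^ (2 * k) - 1) * h2 + (-(rq ^ 2 - 1)) * h3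

lemma rnum_eq (b : ℕ) : rnum b = (rq ^ b - 1) / (rq - 1) := by
  rw [eq_div_iff rq_sub_one_ne]
  exact geom_sum_mul rq b

lemma rnum_succ (b : ℕ) : rnum (b + 1) = rnum b + rq ^ b := Finset.sum_range_succ _ b

lemma rnumpow_eq (m b : ℕ) (hm : m ≠ 0) :
    rnumpow m b = (rq ^ (m * b) - 1) / (rq ^ m - 1) := by
  rw [eq_div_iff (pow_sub_one_ne m hm)]
  have : rnumpow m b = ∑ k ∈ Finset.range b, (rq ^ m) ^ k := by
    simp [rnumpow, ← pow_mul]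
  rw [this, geom_sum_mul, ← pow_mul]

lemma rnumpow_zero (m : ℕ) : rnumpow m 0 = 0 := by simp [rnumpow]

lemma rnumpow_one (m : ℕ) : rnumpow m 1 = 1 := by simp [rnumpow]

lemma rnumpow_succ (m b : ℕ) : rnumpow m (b + 1) = rnumpow m b + rq ^ (m * b) :=
  Finset.sum_range_succ _ b

lemma rnumpow_succ' (m b : ℕ) : rnumpow m (b + 1) = 1 + rq ^ m * rnumpow m b := by
  rw [rnumpow, Finset.sum_range_succ']
  simp only [Nat.mul_zero, pow_zero, Finset.mul_sum, rnumpow, Nat.mul_succ, pow_add]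
  rw [add_comm]
  congr 1
  exact Finset.sum_congr rfl fun k _ => by ring

lemma Usum (e z : ℕ) : ∀ a : ℕ,
    (rq ^ 2 - 1) * (rq - 1) ^ 2 * rq ^ a *
        ∑ k ∈ Finset.Icc 1 a, rwt k * rnum e * rnum (z + (e + 1) * k)
      = rq ^ (a + 1) * ((rq ^ e - 1) * rq ^ (z + e + 2) * rnumpow (e + 2) a
          - rq ^ (z + e) * (rq ^ (e * a) - 1))
        - (rq ^ e - 1) * (rq ^ (a + 2) * rnum a - rq * rnum a) := by
  intro a
  induction a with
  | zero => simp [rnum, rnumpow]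
  | succ b ih =>
    rw [Finset.sum_Icc_succ_top (by omega), rnumpow_succ, rnum_succ]
    have hstep : (rq ^ 2 - 1) * (rq - 1) ^ 2 * rq ^ (b + 1) *
        (rwt (b + 1) * rnum e * rnum (z + (e + 1) * (b + 1)))
        = (rq ^ (b + 2) * ((rq ^ e - 1) * rq ^ (z + e + 2) * (rnumpow (e + 2) b + rq ^ ((e+2)*b))
            - rq ^ (z + e) * (rq ^ (e * (b+1)) - 1))
          - (rq ^ e - 1) * (rq ^ (b + 3) * (rnum b + rq ^ b) - rq * (rnum b + rq ^ b)))
        - rq * (rq ^ (b + 1) * ((rq ^ e - 1) * rq ^ (z + e + 2) * rnumpow (e + 2) b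
            - rq ^ (z + e) * (rq ^ (e * b) - 1))
          - (rq ^ e - 1) * (rq ^ (b + 2) * rnum b - rq * rnum b)) := by
      have h0 : rq ≠ 0 := rq_ne
      have h1 : rq - 1 ≠ 0 := rq_sub_one_ne
      have h2 : rq ^ 2 - 1 ≠ 0 := sq_sub_one_ne
      have h3 : rq ^ (b + 1) ≠ 0 := pow_ne_zero _ rq_ne
      rw [rwt_div, rnum_eq e, rnum_eq b, rnum_eq (z + (e + 1) * (b + 1))]
      field_simp
      ring
    linear_combination rq * ih + hstep


lemma pow_mul_rwt (k : ℕ) :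
    rq ^ k * rwt (k + 1) = (rq ^ (2 * (k + 1)) - 1) / (rq ^ 2 - 1) := by
  rw [rwt_div, mul_div_assoc', div_eq_div_iff
    (mul_ne_zero (pow_ne_zero _ rq_ne) sq_sub_one_ne) sq_sub_one_ne]
  ring


lemma rnum_mul (c : ℕ) : rnum c * (rq - 1) = rq ^ c - 1 := geom_sum_mul rq c

lemma rnumpow_mul (m c : ℕ) : rnumpow m c * (rq ^ m - 1) = rq ^ (m * c) - 1 := by
  have h : rnumpow m c = ∑ k ∈ Finset.range c, (rq ^ m) ^ k := by
    simp [rnumpow, ← pow_mul]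
  rw [h, geom_sum_mul, ← pow_mul]

lemma rwt_mul (k : ℕ) : rq ^ k * rwt (k + 1) * (rq ^ 2 - 1) = rq ^ (2 * (k + 1)) - 1 := by
  rw [pow_mul_rwt, div_mul_cancel₀ _ sq_sub_one_ne]

lemma hcoreM (e z b : ℕ) :
    ((rq - 1) ^ 2 * (rq ^ (e + 1) - 1) * (rq ^ (e + 2) - 1) * (rq ^ 2 - 1)) *
      (rq * (rnumpow (e + 2) (b + 1 + 1) * rnum (e + 1) * rnum (z + (b + 1 + 1)))
        - rq * (rq ^ (b + 1 + 1) * rnumpow (e + 1) (b + 1 + 1) * rnum e * rnum z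
            + rq ^ (b + 1) * rwt (b + 1 + 1) * rnum (z + (e + 1) * (b + 1 + 1)))
        - rq ^ (e + 3) * (rnumpow (e + 2) (b + 1) * rnum (e + 1) * rnum (z + (b + 1)))
        + rq ^ (e + 3) * (rq ^ (b + 1) * rnumpow (e + 1) (b + 1) * rnum e * rnum z
            + rq ^ b * rwt (b + 1) * rnum (z + (e + 1) * (b + 1))))
    = ((rq - 1) ^ 2 * (rq ^ (e + 1) - 1) * (rq ^ (e + 2) - 1)) * rq *
        (rq ^ (b + 1 + 1) * ((rq ^ e - 1) * rq ^ (z + e + 2) * rnumpow (e + 2) (b + 1)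
            - rq ^ (z + e) * (rq ^ (e * (b + 1)) - 1))
          - (rq ^ e - 1) * (rq ^ (b + 1 + 2) * rnum (b + 1) - rq * rnum (b + 1))) := by
  have H1 : rnum z * (rq - 1) = rq ^ z - 1 := rnum_mul z
  have H2 : rnum e * (rq - 1) = rq ^ e - 1 := rnum_mul e
  have H3 : rnum (e + 1) * (rq - 1) = rq ^ (e + 1) - 1 := rnum_mul (e + 1)
  have H4 : rnum (z + (b + 1)) * (rq - 1) = rq ^ (z + (b + 1)) - 1 := rnum_mul _
  have H5 : rnum (z + (b + 1 + 1)) * (rq - 1) = rq ^ (z + (b + 1 + 1)) - 1 := rnum_mul _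
  have H6 : rnum (z + (e + 1) * (b + 1)) * (rq - 1) = rq ^ (z + (e + 1) * (b + 1)) - 1 :=
    rnum_mul _
  have H7 : rnum (z + (e + 1) * (b + 1 + 1)) * (rq - 1)
      = rq ^ (z + (e + 1) * (b + 1 + 1)) - 1 := rnum_mul _
  have H8 : rnum (b + 1) * (rq - 1) = rq ^ (b + 1) - 1 := rnum_mul _
  have H9 : rnumpow (e + 1) (b + 1) * (rq ^ (e + 1) - 1) = rq ^ ((e + 1) * (b + 1)) - 1 :=
    rnumpow_mul _ _
  have H10 : rnumpow (e + 1) (b + 1 + 1) * (rq ^ (e + 1) - 1)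
      = rq ^ ((e + 1) * (b + 1 + 1)) - 1 := rnumpow_mul _ _
  have H11 : rnumpow (e + 2) (b + 1) * (rq ^ (e + 2) - 1) = rq ^ ((e + 2) * (b + 1)) - 1 :=
    rnumpow_mul _ _
  have H12 : rnumpow (e + 2) (b + 1 + 1) * (rq ^ (e + 2) - 1)
      = rq ^ ((e + 2) * (b + 1 + 1)) - 1 := rnumpow_mul _ _
  have H13 : rq ^ b * rwt (b + 1) * (rq ^ 2 - 1) = rq ^ (2 * (b + 1)) - 1 := rwt_mul b
  have H14 : rq ^ (b + 1) * rwt (b + 1 + 1) * (rq ^ 2 - 1) = rq ^ (2 * (b + 1 + 1)) - 1 :=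
    rwt_mul (b + 1)
  linear_combination
      (((-1 : RatFunc ℚ) * ((rq) ^ 3) * (rq ^ b) * ((rnum e)) * ((rnumpow (e+1) (b+1+1))) + ((rq) ^ 4) * (rq ^ b) * ((rnum e)) * ((rnumpow (e+1) (b+1+1))) + ((rq) ^ 4) * (rq ^ b) * (rq ^ e) * ((rnum e)) * ((rnumpow (e+1) (b+1+1))) + ((rq) ^ 4) * (rq ^ b) * (rq ^ e) * ((rnum e)) * ((rnumpow (e+1) (b+1))) + ((rq) ^ 5) * (rq ^ b) * ((rnum e)) * ((rnumpow (e+1) (b+1+1))) + (-1 : RatFunc ℚ) * ((rq) ^ 5) * (rq ^ b) * (rq ^ e) * ((rnum e)) * ((rnumpow (e+1) (b+1))) + (-1 : RatFunc ℚ) * ((rq) ^ 5) * (rq ^ b) * ((rq ^ e) ^ 2) * ((rnum e)) * ((rnumpow (e+1) (b+1))) + (-1 : RatFunc ℚ) * ((rq) ^ 6) * (rq ^ b) * ((rnum e)) * ((rnumpow (e+1) (b+1+1))) + (-2 : RatFunc ℚ) * ((rq) ^ 6) * (rq ^ b) * (rq ^ e) * ((rnum e)) * ((rnumpow (e+1)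 (b+1+1))) + (-1 : RatFunc ℚ) * ((rq) ^ 6) * (rq ^ b) * (rq ^ e) * ((rnum e)) * ((rnumpow (e+1) (b+1))) + (-1 : RatFunc ℚ) * ((rq) ^ 6) * (rq ^ b) * ((rq ^ e) ^ 2) * ((rnum e)) * ((rnumpow (e+1) (b+1+1))) + ((rq) ^ 7) * (rq ^ b) * (rq ^ e) * ((rnum e)) * ((rnumpow (e+1) (b+1))) + ((rq) ^ 7) * (rq ^ b) * ((rq ^ e) ^ 2) * ((rnum e)) * ((rnumpow (e+1) (b+1+1))) + (2 : RatFunc ℚ) * ((rq) ^ 7) * (rq ^ b) * ((rq ^ e) ^ 2) * ((rnum e)) * ((rnumpow (e+1) (b+1))) + ((rq) ^ 7) * (rq ^ b) * ((rq ^ e) ^ 3) * ((rnum e)) * ((rnumpow (e+1) (b+1))) + ((rq) ^ 8) * (rq ^ b) * (rq ^ e) * ((rnum e)) * ((rnumpow (e+1) (b+1+1))) + ((rq) ^ 8) * (rq ^ b) * ((rq ^ e) ^ 2) * ((rnum e)) * ((rnumpow (e+1) (b+1+1))) + (-1 : RatFunc ℚ) * ((rq) ^ 8) * (rq ^ b)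 * ((rq ^ e) ^ 3) * ((rnum e)) * ((rnumpow (e+1) (b+1))) + (-1 : RatFunc ℚ) * ((rq) ^ 9) * (rq ^ b) * ((rq ^ e) ^ 2) * ((rnum e)) * ((rnumpow (e+1) (b+1+1))) + (-1 : RatFunc ℚ) * ((rq) ^ 9) * (rq ^ b) * ((rq ^ e) ^ 2) * ((rnum e)) * ((rnumpow (e+1) (b+1))) + (-1 : RatFunc ℚ) * ((rq) ^ 9) * (rq ^ b) * ((rq ^ e) ^ 3) * ((rnum e)) * ((rnumpow (e+1) (b+1))) + ((rq) ^ 10) * (rq ^ b) * ((rq ^ e) ^ 3) * ((rnum e)) * ((rnumpow (e+1) (b+1))))) * H1 +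
      (((-1 : RatFunc ℚ) * ((rq) ^ 3) * (rq ^ b) * ((rnumpow (e+1) (b+1+1))) + ((rq) ^ 3) * (rq ^ b) * (rq ^ z) * ((rnumpow (e+1) (b+1+1))) + ((rq) ^ 4) * (rq ^ b) * (rq ^ e) * ((rnumpow (e+1) (b+1+1))) + ((rq) ^ 4) * (rq ^ b) * (rq ^ e) * ((rnumpow (e+1) (b+1))) + (-1 : RatFunc ℚ) * ((rq) ^ 4) * (rq ^ b) * (rq ^ e) * (rq ^ z) * ((rnumpow (e+1) (b+1+1))) + (-1 : RatFunc ℚ) * ((rq) ^ 4) * (rq ^ b) * (rq ^ e) * (rq ^ z) * ((rnumpow (e+1) (b+1))) + ((rq) ^ 5) * (rq ^ b) * ((rnumpow (e+1) (b+1+1))) + (-1 : RatFunc ℚ) * ((rq) ^ 5) * (rq ^ b) * (rq ^ z) * ((rnumpow (e+1) (b+1+1))) + ((rq) ^ 5) * (rq ^ b) * (rq ^ e) * ((rnumpow (e+1) (b+1+1))) + (-1 : RatFunc ℚ) * ((rq) ^ 5) * (rq ^ b) * (rq ^ e) * (rq ^ z) * ((rnumpow (e+1) (b+1+1))) + (-1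 : RatFunc ℚ) * ((rq) ^ 5) * (rq ^ b) * ((rq ^ e) ^ 2) * ((rnumpow (e+1) (b+1))) + ((rq) ^ 5) * (rq ^ b) * ((rq ^ e) ^ 2) * (rq ^ z) * ((rnumpow (e+1) (b+1))) + (-1 : RatFunc ℚ) * ((rq) ^ 6) * (rq ^ b) * (rq ^ e) * ((rnumpow (e+1) (b+1+1))) + (-1 : RatFunc ℚ) * ((rq) ^ 6) * (rq ^ b) * (rq ^ e) * ((rnumpow (e+1) (b+1))) + ((rq) ^ 6) * (rq ^ b) * (rq ^ e) * (rq ^ z) * ((rnumpow (e+1) (b+1+1))) + ((rq) ^ 6) * (rq ^ b) * (rq ^ e) * (rq ^ z) * ((rnumpow (e+1) (b+1))) + (-1 : RatFunc ℚ) * ((rq) ^ 6) * (rq ^ b) * ((rq ^ e) ^ 2) * ((rnumpow (e+1) (b+1+1))) + (-1 : RatFunc ℚ) * ((rq) ^ 6) * (rq ^ b) * ((rq ^ e) ^ 2) * ((rnumpow (e+1) (b+1))) + ((rq) ^ 6) * (rq ^ b) * ((rq ^ e) ^ 2) * (rq ^ z) * ((rnumpow (e+1) (b+1+1))) + ((rq)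 ^ 6) * (rq ^ b) * ((rq ^ e) ^ 2) * (rq ^ z) * ((rnumpow (e+1) (b+1))) + (-1 : RatFunc ℚ) * ((rq) ^ 7) * (rq ^ b) * (rq ^ e) * ((rnumpow (e+1) (b+1+1))) + ((rq) ^ 7) * (rq ^ b) * (rq ^ e) * (rq ^ z) * ((rnumpow (e+1) (b+1+1))) + ((rq) ^ 7) * (rq ^ b) * ((rq ^ e) ^ 2) * ((rnumpow (e+1) (b+1))) + (-1 : RatFunc ℚ) * ((rq) ^ 7) * (rq ^ b) * ((rq ^ e) ^ 2) * (rq ^ z) * ((rnumpow (e+1) (b+1))) + ((rq) ^ 7) * (rq ^ b) * ((rq ^ e) ^ 3) * ((rnumpow (e+1) (b+1))) + (-1 : RatFunc ℚ) * ((rq) ^ 7) * (rq ^ b) * ((rq ^ e) ^ 3) * (rq ^ z) * ((rnumpow (e+1) (b+1))) + ((rq) ^ 8) * (rq ^ b) * ((rq ^ e) ^ 2) * ((rnumpow (e+1) (b+1+1))) + ((rq) ^ 8) * (rq ^ b) * ((rq ^ e) ^ 2) * ((rnumpow (e+1) (b+1))) + (-1 : RatFunc ℚ) * ((rq) ^ 8)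 * (rq ^ b) * ((rq ^ e) ^ 2) * (rq ^ z) * ((rnumpow (e+1) (b+1+1))) + (-1 : RatFunc ℚ) * ((rq) ^ 8) * (rq ^ b) * ((rq ^ e) ^ 2) * (rq ^ z) * ((rnumpow (e+1) (b+1))) + (-1 : RatFunc ℚ) * ((rq) ^ 9) * (rq ^ b) * ((rq ^ e) ^ 3) * ((rnumpow (e+1) (b+1))) + ((rq) ^ 9) * (rq ^ b) * ((rq ^ e) ^ 3) * (rq ^ z) * ((rnumpow (e+1) (b+1))))) * H2 +
      (((rq) * ((rnum (z+(b+1+1)))) * ((rnumpow (e+2) (b+1+1))) + (-1 : RatFunc ℚ) * ((rq) ^ 2) * ((rnum (z+(b+1+1)))) * ((rnumpow (e+2) (b+1+1))) + (-1 : RatFunc ℚ) * ((rq) ^ 2) * (rq ^ e) * ((rnum (z+(b+1+1)))) * ((rnumpow (e+2) (b+1+1))) + (-1 : RatFunc ℚ) * ((rq) ^ 3) * ((rnum (z+(b+1+1)))) * ((rnumpow (e+2) (b+1+1))) + (-1 : RatFunc ℚ) * ((rq) ^ 3) * (rq ^ e) * ((rnum (z+(b+1)))) * ((rnumpow (e+2)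 (b+1))) + ((rq) ^ 4) * ((rnum (z+(b+1+1)))) * ((rnumpow (e+2) (b+1+1))) + (2 : RatFunc ℚ) * ((rq) ^ 4) * (rq ^ e) * ((rnum (z+(b+1+1)))) * ((rnumpow (e+2) (b+1+1))) + ((rq) ^ 4) * (rq ^ e) * ((rnum (z+(b+1)))) * ((rnumpow (e+2) (b+1))) + ((rq) ^ 4) * ((rq ^ e) ^ 2) * ((rnum (z+(b+1+1)))) * ((rnumpow (e+2) (b+1+1))) + ((rq) ^ 4) * ((rq ^ e) ^ 2) * ((rnum (z+(b+1)))) * ((rnumpow (e+2) (b+1))) + ((rq) ^ 5) * (rq ^ e) * ((rnum (z+(b+1)))) * ((rnumpow (e+2) (b+1))) + (-1 : RatFunc ℚ) * ((rq) ^ 5) * ((rq ^ e) ^ 2) * ((rnum (z+(b+1+1)))) * ((rnumpow (e+2) (b+1+1))) + (-1 : RatFunc ℚ) * ((rq) ^ 6) * (rq ^ e) * ((rnum (z+(b+1+1)))) * ((rnumpow (e+2) (b+1+1))) + (-1 : RatFunc ℚ) * ((rq) ^ 6) * (rq ^ e) * ((rnum (z+(b+1)))) * ((rnumpow (e+2)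 (b+1))) + (-1 : RatFunc ℚ) * ((rq) ^ 6) * ((rq ^ e) ^ 2) * ((rnum (z+(b+1+1)))) * ((rnumpow (e+2) (b+1+1))) + (-2 : RatFunc ℚ) * ((rq) ^ 6) * ((rq ^ e) ^ 2) * ((rnum (z+(b+1)))) * ((rnumpow (e+2) (b+1))) + (-1 : RatFunc ℚ) * ((rq) ^ 6) * ((rq ^ e) ^ 3) * ((rnum (z+(b+1)))) * ((rnumpow (e+2) (b+1))) + ((rq) ^ 7) * ((rq ^ e) ^ 2) * ((rnum (z+(b+1+1)))) * ((rnumpow (e+2) (b+1+1))) + ((rq) ^ 7) * ((rq ^ e) ^ 3) * ((rnum (z+(b+1)))) * ((rnumpow (e+2) (b+1))) + ((rq) ^ 8) * ((rq ^ e) ^ 2) * ((rnum (z+(b+1)))) * ((rnumpow (e+2) (b+1))) + ((rq) ^ 8) * ((rq ^ e) ^ 3) * ((rnum (z+(b+1)))) * ((rnumpow (e+2) (b+1))) + (-1 : RatFunc ℚ) * ((rq) ^ 9) * ((rq ^ e) ^ 3) * ((rnum (z+(b+1)))) * ((rnumpow (e+2) (b+1))))) * H3 +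
      (((-1 : RatFunc ℚ) * ((rq) ^ 3) * (rq ^ e) * ((rnumpow (e+2) (b+1))) + (2 : RatFunc ℚ) * ((rq) ^ 4) * ((rq ^ e) ^ 2) * ((rnumpow (e+2) (b+1))) + ((rq) ^ 5) * (rq ^ e) * ((rnumpow (e+2) (b+1))) + ((rq) ^ 5) * ((rq ^ e) ^ 2) * ((rnumpow (e+2) (b+1))) + (-1 : RatFunc ℚ) * ((rq) ^ 5) * ((rq ^ e) ^ 3) * ((rnumpow (e+2) (b+1))) + (-2 : RatFunc ℚ) * ((rq) ^ 6) * ((rq ^ e) ^ 2) * ((rnumpow (e+2) (b+1))) + (-2 : RatFunc ℚ) * ((rq) ^ 6) * ((rq ^ e) ^ 3) * ((rnumpow (e+2) (b+1))) + (-1 : RatFunc ℚ) * ((rq) ^ 7) * ((rq ^ e) ^ 2) * ((rnumpow (e+2) (b+1))) + ((rq) ^ 7) * ((rq ^ e) ^ 3) * ((rnumpow (e+2) (b+1))) + ((rq) ^ 7) * ((rq ^ e) ^ 4) * ((rnumpow (e+2) (b+1))) + (2 : RatFunc ℚ) * ((rq) ^ 8) * ((rq ^ e) ^ 3) * ((rnumpow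 (e+2) (b+1))) + (-1 : RatFunc ℚ) * ((rq) ^ 9) * ((rq ^ e) ^ 4) * ((rnumpow (e+2) (b+1))))) * H4 +
      (((rq) * ((rnumpow (e+2) (b+1+1))) + (-2 : RatFunc ℚ) * ((rq) ^ 2) * (rq ^ e) * ((rnumpow (e+2) (b+1+1))) + (-1 : RatFunc ℚ) * ((rq) ^ 3) * ((rnumpow (e+2) (b+1+1))) + (-1 : RatFunc ℚ) * ((rq) ^ 3) * (rq ^ e) * ((rnumpow (e+2) (b+1+1))) + ((rq) ^ 3) * ((rq ^ e) ^ 2) * ((rnumpow (e+2) (b+1+1))) + (2 : RatFunc ℚ) * ((rq) ^ 4) * (rq ^ e) * ((rnumpow (e+2) (b+1+1))) + (2 : RatFunc ℚ) * ((rq) ^ 4) * ((rq ^ e) ^ 2) * ((rnumpow (e+2) (b+1+1))) + ((rq) ^ 5) * (rq ^ e) * ((rnumpow (e+2) (b+1+1))) + (-1 : RatFunc ℚ) * ((rq) ^ 5) * ((rq ^ e) ^ 2) * ((rnumpow (e+2) (b+1+1))) + (-1 : RatFunc ℚ) * ((rq) ^ 5) * ((rq ^ e) ^ 3) * ((rnumpow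 (e+2) (b+1+1))) + (-2 : RatFunc ℚ) * ((rq) ^ 6) * ((rq ^ e) ^ 2) * ((rnumpow (e+2) (b+1+1))) + ((rq) ^ 7) * ((rq ^ e) ^ 3) * ((rnumpow (e+2) (b+1+1))))) * H5 +
      ((((rq) ^ 3) * (rq ^ e) * ((rq ^ b * rwt (b+1))) + (-1 : RatFunc ℚ) * ((rq) ^ 4) * (rq ^ e) * ((rq ^ b * rwt (b+1))) + (-1 : RatFunc ℚ) * ((rq) ^ 4) * ((rq ^ e) ^ 2) * ((rq ^ b * rwt (b+1))) + (-1 : RatFunc ℚ) * ((rq) ^ 5) * (rq ^ e) * ((rq ^ b * rwt (b+1))) + ((rq) ^ 6) * (rq ^ e) * ((rq ^ b * rwt (b+1))) + (2 : RatFunc ℚ) * ((rq) ^ 6) * ((rq ^ e) ^ 2) * ((rq ^ b * rwt (b+1))) + ((rq) ^ 6) * ((rq ^ e) ^ 3) * ((rq ^ b * rwt (b+1))) + (-1 : RatFunc ℚ) * ((rq) ^ 7) * ((rq ^ e) ^ 3) * ((rq ^ b * rwt (b+1))) + (-1 : RatFunc ℚ) * ((rq) ^ 8) * ((rq ^ e)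 ^ 2) * ((rq ^ b * rwt (b+1))) + (-1 : RatFunc ℚ) * ((rq) ^ 8) * ((rq ^ e) ^ 3) * ((rq ^ b * rwt (b+1))) + ((rq) ^ 9) * ((rq ^ e) ^ 3) * ((rq ^ b * rwt (b+1))))) * H6 +
      (((-1 : RatFunc ℚ) * (rq) * ((rq ^ (b+1) * rwt (b+1+1))) + ((rq) ^ 2) * ((rq ^ (b+1) * rwt (b+1+1))) + ((rq) ^ 2) * (rq ^ e) * ((rq ^ (b+1) * rwt (b+1+1))) + ((rq) ^ 3) * ((rq ^ (b+1) * rwt (b+1+1))) + (-1 : RatFunc ℚ) * ((rq) ^ 4) * ((rq ^ (b+1) * rwt (b+1+1))) + (-2 : RatFunc ℚ) * ((rq) ^ 4) * (rq ^ e) * ((rq ^ (b+1) * rwt (b+1+1))) + (-1 : RatFunc ℚ) * ((rq) ^ 4) * ((rq ^ e) ^ 2) * ((rq ^ (b+1) * rwt (b+1+1))) + ((rq) ^ 5) * ((rq ^ e) ^ 2) * ((rq ^ (b+1) * rwt (b+1+1))) + ((rq) ^ 6) * (rq ^ e) * ((rq ^ (b+1) * rwt (b+1+1))) + ((rq) ^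 6) * ((rq ^ e) ^ 2) * ((rq ^ (b+1) * rwt (b+1+1))) + (-1 : RatFunc ℚ) * ((rq) ^ 7) * ((rq ^ e) ^ 2) * ((rq ^ (b+1) * rwt (b+1+1))))) * H7 +
      (((-1 : RatFunc ℚ) * ((rq) ^ 2) + ((rq) ^ 2) * (rq ^ e) + ((rq) ^ 3) + (-1 : RatFunc ℚ) * ((rq) ^ 3) * ((rq ^ e) ^ 2) + ((rq) ^ 4) * (rq ^ b) + (-1 : RatFunc ℚ) * ((rq) ^ 4) * (rq ^ b) * (rq ^ e) + (-1 : RatFunc ℚ) * ((rq) ^ 5) * (rq ^ e) + ((rq) ^ 5) * ((rq ^ e) ^ 3) + (-1 : RatFunc ℚ) * ((rq) ^ 5) * (rq ^ b) + ((rq) ^ 5) * (rq ^ b) * ((rq ^ e) ^ 2) + ((rq) ^ 6) * ((rq ^ e) ^ 2) + (-1 : RatFunc ℚ) * ((rq) ^ 6) * ((rq ^ e) ^ 3) + ((rq) ^ 7) * (rq ^ b) * (rq ^ e) + (-1 : RatFunc ℚ) * ((rq) ^ 7) * (rq ^ b) * ((rq ^ e) ^ 3) + (-1 : RatFunc ℚ)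 * ((rq) ^ 8) * (rq ^ b) * ((rq ^ e) ^ 2) + ((rq) ^ 8) * (rq ^ b) * ((rq ^ e) ^ 3))) * H8 +
      ((((rq) ^ 4) * (rq ^ b) * (rq ^ e) + (-1 : RatFunc ℚ) * ((rq) ^ 4) * (rq ^ b) * (rq ^ e) * (rq ^ z) + (-1 : RatFunc ℚ) * ((rq) ^ 4) * (rq ^ b) * ((rq ^ e) ^ 2) + ((rq) ^ 4) * (rq ^ b) * ((rq ^ e) ^ 2) * (rq ^ z) + (-1 : RatFunc ℚ) * ((rq) ^ 6) * (rq ^ b) * (rq ^ e) + ((rq) ^ 6) * (rq ^ b) * (rq ^ e) * (rq ^ z) + ((rq) ^ 6) * (rq ^ b) * ((rq ^ e) ^ 3) + (-1 : RatFunc ℚ) * ((rq) ^ 6) * (rq ^ b) * ((rq ^ e) ^ 3) * (rq ^ z) + ((rq) ^ 8) * (rq ^ b) * ((rq ^ e) ^ 2) + (-1 : RatFunc ℚ) * ((rq) ^ 8) * (rq ^ b) * ((rq ^ e) ^ 2) * (rq ^ z) + (-1 : RatFunc ℚ) * ((rq) ^ 8) * (rq ^ b) * ((rq ^ e) ^ 3)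 + ((rq) ^ 8) * (rq ^ b) * ((rq ^ e) ^ 3) * (rq ^ z))) * H9 +
      (((-1 : RatFunc ℚ) * ((rq) ^ 3) * (rq ^ b) + ((rq) ^ 3) * (rq ^ b) * (rq ^ z) + ((rq) ^ 3) * (rq ^ b) * (rq ^ e) + (-1 : RatFunc ℚ) * ((rq) ^ 3) * (rq ^ b) * (rq ^ e) * (rq ^ z) + ((rq) ^ 5) * (rq ^ b) + (-1 : RatFunc ℚ) * ((rq) ^ 5) * (rq ^ b) * (rq ^ z) + (-1 : RatFunc ℚ) * ((rq) ^ 5) * (rq ^ b) * ((rq ^ e) ^ 2) + ((rq) ^ 5) * (rq ^ b) * ((rq ^ e) ^ 2) * (rq ^ z) + (-1 : RatFunc ℚ) * ((rq) ^ 7) * (rq ^ b) * (rq ^ e) + ((rq) ^ 7) * (rq ^ b) * (rq ^ e) * (rq ^ z) + ((rq) ^ 7) * (rq ^ b) * ((rq ^ e) ^ 2) + (-1 : RatFunc ℚ) * ((rq) ^ 7) * (rq ^ b) * ((rq ^ e) ^ 2) * (rq ^ z))) * H10 +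
      (((-1 : RatFunc ℚ) * ((rq) ^ 3) * (rq ^ e) + (2 : RatFunc ℚ) * ((rq) ^ 4) * ((rq ^ e) ^ 2) + ((rq) ^ 4) * (rq ^ b) * (rq ^ e) * (rq ^ z) + ((rq) ^ 5) * (rq ^ e) + (-1 : RatFunc ℚ) * ((rq) ^ 5) * ((rq ^ e) ^ 3) + (-1 : RatFunc ℚ) * ((rq) ^ 5) * (rq ^ b) * (rq ^ e) * (rq ^ z) + (-1 : RatFunc ℚ) * ((rq) ^ 5) * (rq ^ b) * ((rq ^ e) ^ 2) * (rq ^ z) + (-2 : RatFunc ℚ) * ((rq) ^ 6) * ((rq ^ e) ^ 2) + ((rq) ^ 6) * (rq ^ b) * (rq ^ e) * (rq ^ z) + (-1 : RatFunc ℚ) * ((rq) ^ 6) * (rq ^ b) * ((rq ^ e) ^ 2) * (rq ^ z) + ((rq) ^ 7) * ((rq ^ e) ^ 3) + (-1 : RatFunc ℚ) * ((rq) ^ 7) * (rq ^ b) * (rq ^ e) * (rq ^ z) + ((rq) ^ 7) * (rq ^ b) * ((rq ^ e) ^ 2) * (rq ^ z) + (2 : RatFunc ℚ) * ((rq) ^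 7) * (rq ^ b) * ((rq ^ e) ^ 3) * (rq ^ z) + ((rq) ^ 8) * (rq ^ b) * ((rq ^ e) ^ 2) * (rq ^ z) + (-2 : RatFunc ℚ) * ((rq) ^ 8) * (rq ^ b) * ((rq ^ e) ^ 3) * (rq ^ z))) * H11 +
      (((rq) + (-2 : RatFunc ℚ) * ((rq) ^ 2) * (rq ^ e) + (-1 : RatFunc ℚ) * ((rq) ^ 3) + ((rq) ^ 3) * ((rq ^ e) ^ 2) + (-1 : RatFunc ℚ) * ((rq) ^ 3) * (rq ^ b) * (rq ^ z) + (2 : RatFunc ℚ) * ((rq) ^ 4) * (rq ^ e) + (2 : RatFunc ℚ) * ((rq) ^ 4) * (rq ^ b) * (rq ^ e) * (rq ^ z) + (-1 : RatFunc ℚ) * ((rq) ^ 5) * ((rq ^ e) ^ 2) + ((rq) ^ 5) * (rq ^ b) * (rq ^ z) + (-1 : RatFunc ℚ) * ((rq) ^ 5) * (rq ^ b) * ((rq ^ e) ^ 2) * (rq ^ z) + (-2 : RatFunc ℚ) * ((rq) ^ 6) * (rq ^ b) * (rq ^ e) * (rq ^ z) + ((rq) ^ 7) * (rq ^ b) *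 ((rq ^ e) ^ 2) * (rq ^ z))) * H12 +
      ((((rq) ^ 3) * (rq ^ e) + (-1 : RatFunc ℚ) * ((rq) ^ 4) * (rq ^ e) + (-1 : RatFunc ℚ) * ((rq) ^ 4) * ((rq ^ e) ^ 2) + (-1 : RatFunc ℚ) * ((rq) ^ 4) * (rq ^ b) * ((rq ^ e) ^ 2) * (rq ^ z) * (rq ^ (e*b)) + ((rq) ^ 5) * (rq ^ b) * ((rq ^ e) ^ 2) * (rq ^ z) * (rq ^ (e*b)) + ((rq) ^ 5) * (rq ^ b) * ((rq ^ e) ^ 3) * (rq ^ z) * (rq ^ (e*b)) + ((rq) ^ 6) * ((rq ^ e) ^ 2) + ((rq) ^ 6) * ((rq ^ e) ^ 3) + (-1 : RatFunc ℚ) * ((rq) ^ 7) * ((rq ^ e) ^ 3) + (-1 : RatFunc ℚ) * ((rq) ^ 7) * (rq ^ b) * ((rq ^ e) ^ 3) * (rq ^ z) * (rq ^ (e*b)) + (-1 : RatFunc ℚ) * ((rq) ^ 7) * (rq ^ b) * ((rq ^ e) ^ 4) * (rq ^ z) * (rq ^ (e*b)) + ((rq) ^ 8) * (rq ^ b) *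 ((rq ^ e) ^ 4) * (rq ^ z) * (rq ^ (e*b)))) * H13 +
      (((-1 : RatFunc ℚ) * (rq) + ((rq) ^ 2) + ((rq) ^ 2) * (rq ^ e) + ((rq) ^ 3) * (rq ^ b) * ((rq ^ e) ^ 2) * (rq ^ z) * (rq ^ (e*b)) + (-1 : RatFunc ℚ) * ((rq) ^ 4) * (rq ^ e) + (-1 : RatFunc ℚ) * ((rq) ^ 4) * ((rq ^ e) ^ 2) + (-1 : RatFunc ℚ) * ((rq) ^ 4) * (rq ^ b) * ((rq ^ e) ^ 2) * (rq ^ z) * (rq ^ (e*b)) + (-1 : RatFunc ℚ) * ((rq) ^ 4) * (rq ^ b) * ((rq ^ e) ^ 3) * (rq ^ z) * (rq ^ (e*b)) + ((rq) ^ 5) * ((rq ^ e) ^ 2) + ((rq) ^ 6) * (rq ^ b) * ((rq ^ e) ^ 3) * (rq ^ z) * (rq ^ (e*b)) + ((rq) ^ 6) * (rq ^ b) * ((rq ^ e) ^ 4) * (rq ^ z) * (rq ^ (e*b)) + (-1 : RatFunc ℚ) * ((rq) ^ 7) * (rq ^ b) * ((rq ^ e) ^ 4) * (rq ^ z) * (rq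 ^ (e*b)))) * H14


lemma main' (e z : ℕ) : ∀ b : ℕ,
    rq * (rnumpow (e + 2) (b + 1) * rnum (e + 1) * rnum (z + (b + 1)))
      = rq * (rq ^ (b + 1) * rnumpow (e + 1) (b + 1) * rnum e * rnum z
          + rq ^ b * rwt (b + 1) * rnum (z + (e + 1) * (b + 1)))
        + rq ^ (b + 1) * (rq - 1) ^ 2 *
            ∑ k ∈ Finset.Icc 1 b,
              rwt k * rnumpow (e + 1) (b + 1 - k) * rnum e * rnum (z + (e + 1) * k) := by
  intro b
  have h0 : rq ≠ 0 := rq_ne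
  have h1 : rq - 1 ≠ 0 := rq_sub_one_ne
  have h2 : rq ^ 2 - 1 ≠ 0 := sq_sub_one_ne
  have he1 : rq ^ (e + 1) - 1 ≠ 0 := pow_sub_one_ne _ (by omega)
  have he2 : rq ^ (e + 2) - 1 ≠ 0 := pow_sub_one_ne _ (by omega)
  induction b with
  | zero =>
    rw [show Finset.Icc 1 0 = (∅ : Finset ℕ) from Finset.Icc_eq_empty (by omega),
      Finset.sum_empty, mul_zero, add_zero, rnumpow_one, rnumpow_one]
    simp only [rwt_div, rnum_eq]
    field_simp
    ring
  | succ b ih =>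
    have hpeel : ∑ k ∈ Finset.Icc 1 (b + 1),
          rwt k * rnumpow (e + 1) (b + 1 - k) * rnum e * rnum (z + (e + 1) * k)
        = ∑ k ∈ Finset.Icc 1 b,
            rwt k * rnumpow (e + 1) (b + 1 - k) * rnum e * rnum (z + (e + 1) * k) := by
      rw [Finset.sum_Icc_succ_top (by omega : 1 ≤ b + 1),
        show b + 1 - (b + 1) = 0 by omega, rnumpow_zero]
      ring
    have hsplit : ∑ k ∈ Finset.Icc 1 (b + 1),
          rwt k * rnumpow (e + 1) (b + 1 + 1 - k) * rnum e * rnum (z + (e + 1) * k)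
        = (∑ k ∈ Finset.Icc 1 (b + 1), rwt k * rnum e * rnum (z + (e + 1) * k))
          + rq ^ (e + 1) * ∑ k ∈ Finset.Icc 1 b,
              rwt k * rnumpow (e + 1) (b + 1 - k) * rnum e * rnum (z + (e + 1) * k) := by
      have hterm : ∀ k ∈ Finset.Icc 1 (b + 1),
          rwt k * rnumpow (e + 1) (b + 1 + 1 - k) * rnum e * rnum (z + (e + 1) * k)
          = rwt k * rnum e * rnum (z + (e + 1) * k)
            + rq ^ (e + 1) * (rwt k * rnumpow (e + 1) (b + 1 - k) * rnum e *
                rnum (z + (e + 1) * k)) := by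
        intro k hk
        rw [Finset.mem_Icc] at hk
        rw [show b + 1 + 1 - k = (b + 1 - k) + 1 by omega, rnumpow_succ']
        ring
      rw [Finset.sum_congr rfl hterm, Finset.sum_add_distrib, ← Finset.mul_sum, hpeel]
    rw [hsplit]
    have hE : ((rq - 1) ^ 2 * (rq ^ (e + 1) - 1) * (rq ^ (e + 2) - 1) * (rq ^ 2 - 1)) ≠ 0 :=
      mul_ne_zero (mul_ne_zero (mul_ne_zero (pow_ne_zero _ rq_sub_one_ne) he1) he2) h2
    apply mul_left_cancel₀ hE
    linear_combination hcoreM e z b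
      + (((rq - 1) ^ 2 * (rq ^ (e + 1) - 1) * (rq ^ (e + 2) - 1) * (rq ^ 2 - 1)) * rq ^ (e + 2))
          * ih
      - (((rq - 1) ^ 2 * (rq ^ (e + 1) - 1) * (rq ^ (e + 2) - 1)) * rq) * Usum e z (b + 1)

theorem key_lemma_qqinv (a d z : ℕ) (ha : 0 < a) (hd : 0 < d) (hz : 0 < z) :
    rnumpow (d+1) a * rnum d * rnum (z + a) =
      rq ^ a * rnumpow d a * rnum (d - 1) * rnum z +
        rq ^ (a - 1) * rwt a * rnum (z + d * a) -
        rq ^ a * (1 - rq) * (1 - rq⁻¹) *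
          ∑ k ∈ Finset.Icc 1 (a - 1),
            rwt k * rnumpow d (a - k) * rnum (d - 1) * rnum (z + d * k) := by
  obtain ⟨b, rfl⟩ : ∃ b, a = b + 1 := ⟨a - 1, by omega⟩
  obtain ⟨e, rfl⟩ : ∃ e, d = e + 1 := ⟨d - 1, by omega⟩
  simp only [Nat.add_sub_cancel, show e + 1 + 1 = e + 2 from rfl]
  have hq : rq * ((1 - rq) * (1 - rq⁻¹)) = -(rq - 1) ^ 2 := by
    have hinv : rq * rq⁻¹ = 1 := mul_inv_cancel₀ rq_ne
    linear_combination (rq - 1) * hinv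
  apply mul_left_cancel₀ rq_ne
  linear_combination main' e z b
    + (rq ^ (b + 1) * ∑ k ∈ Finset.Icc 1 b,
        rwt k * rnumpow (e + 1) (b + 1 - k) * rnum e * rnum (z + (e + 1) * k)) * hq


end ThresholdFlow
end
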